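/- arXiv:1612.06230 — 5 statements merged into one kernel-verified Lean document; each statement's English description precedes it below -/
import Mathlib

section
/- Let (u_n) be a sequence in H¹_μ(I) which is bounded in the sense that there exist μ-gradients v_n ∈ Γ(u_n) with sup_n (‖u_n‖²_{L²(μ)} + ‖v_n‖²_{L²(μ)}) < ∞. Then there exist a subsequence (u_{n_k}) and a function u such that u_{n_k}(x) → u(x) for μ-almost every x ∈ V = I \ (M ∪ A), i.e. at μ-a.e. point where the tangent space to μ is ℝ. -/
/-!
For a `C¹` function `U`, Cauchy–Schwarz against the absolutely continuous part `f · 𝓛¹ ≤ μ` gives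
`|U y - U x|² ≤ ‖U'‖²_{L²(μ)} · ρ((x, y])` with `ρ = f⁻¹ · 𝓛¹`, and this passes to limits, so
`|u_n y - u_n x|² ≤ C ρ((x, y])` on a `μ`-conull set. On an interval of finite `ρ`-measure the
`u_n` are thus uniformly equicontinuous for the gauge `t ↦ ρ((p, t])`, and the `L²(μ)` bound makes
them uniformly bounded there; a diagonal (Arzelà–Ascoli) argument over the countably many
rational such intervals gives a subsequence converging at `μ`-a.e. point having a neighbourhood of
finite `ρ`-measure. Outside `M` every point of `I` has such a neighbourhood.
-/

open MeasureTheory Filter Set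
open scoped ENNReal Topology

/-- `v ∈ Γ(u)`: `v` is a `μ`-gradient of `u`. -/
def IsGradient (μ : Measure ℝ) (u v : ℝ → ℝ) : Prop :=
  ∃ U : ℕ → ℝ → ℝ, (∀ n, ContDiff ℝ 1 (U n)) ∧
    Tendsto (fun n => eLpNorm (fun x => U n x - u x) 2 μ) atTop (nhds 0) ∧
    Tendsto (fun n => eLpNorm (fun x => deriv (U n) x - v x) 2 μ) atTop (nhds 0)

theorem ENNReal.lintegral_sq_le_lintegral_mul_sq_mul_lintegral_inv {α : Type*}
    [MeasurableSpace α] {ν : Measure α} {g w : α → ℝ≥0∞} (hg : AEMeasurable g ν)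
    (hw : AEMeasurable w ν) (hw0 : ∀ᵐ t ∂ν, w t ≠ 0) (hwtop : ∀ᵐ t ∂ν, w t ≠ ⊤) :
    (∫⁻ t, g t ∂ν) ^ 2 ≤ (∫⁻ t, w t * g t ^ 2 ∂ν) * ∫⁻ t, (w t)⁻¹ ∂ν := by
  have hsqrt (X : ℝ≥0∞) : (X ^ (1 / 2 : ℝ)) ^ 2 = X := by
    rw [← ENNReal.rpow_natCast, ← ENNReal.rpow_mul]; norm_num
  -- write `g = (g √w) (1 / √w)` and apply Hölder with exponents `2, 2`
  have hsplit : ∀ᵐ t ∂ν,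
      g t = ((fun t => g t * w t ^ (1 / 2 : ℝ)) * fun t => w t ^ (-1 / 2 : ℝ)) t := by
    filter_upwards [hw0, hwtop] with t h0 htop
    rw [Pi.mul_apply, mul_assoc, ← ENNReal.rpow_add _ _ h0 htop]; norm_num
  have hleft (t : α) : (g t * w t ^ (1 / 2 : ℝ)) ^ (2 : ℝ) = w t * g t ^ 2 := by
    rw [ENNReal.mul_rpow_of_nonneg _ _ zero_le_two, ← ENNReal.rpow_mul, mul_comm]; norm_num
  have hright (t : α) : (w t ^ (-1 / 2 : ℝ)) ^ (2 : ℝ) = (w t)⁻¹ := by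
    rw [← ENNReal.rpow_mul]; norm_num [ENNReal.rpow_neg_one]
  calc (∫⁻ t, g t ∂ν) ^ 2
      ≤ ((∫⁻ t, w t * g t ^ 2 ∂ν) ^ (1 / 2 : ℝ) * (∫⁻ t, (w t)⁻¹ ∂ν) ^ (1 / 2 : ℝ)) ^ 2 := by
        gcongr
        rw [lintegral_congr_ae hsplit]
        have := ENNReal.lintegral_mul_le_Lp_mul_Lq ν Real.HolderConjugate.two_two
          (f := fun t => g t * w t ^ (1 / 2 : ℝ)) (g := fun t => w t ^ (-1 / 2 : ℝ))
          (hg.mul (hw.pow_const _)) (hw.pow_const _)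
        simpa only [hleft, hright] using this
    _ = _ := by rw [mul_pow, hsqrt, hsqrt]

theorem eLpNorm_two_sq {α : Type*} [MeasurableSpace α] (μ : Measure α) (g : α → ℝ) :
    eLpNorm g 2 μ ^ 2 = ∫⁻ x, ‖g x‖ₑ ^ 2 ∂μ := by
  simpa using eLpNorm_nnreal_pow_eq_lintegral (μ := μ) (f := g) (p := 2) two_ne_zero

theorem enorm_sub_le_lintegral_deriv {U : ℝ → ℝ} (hU : ContDiff ℝ 1 U) {x y : ℝ} (hxy : x ≤ y) :
    ‖U y - U x‖ₑ ≤ ∫⁻ t in Ioc x y, ‖deriv U t‖ₑ := by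
  have hU' : Continuous (deriv U) := hU.continuous_deriv le_rfl
  rw [← intervalIntegral.integral_deriv_eq_sub
    (fun t _ => (hU.differentiable one_ne_zero).differentiableAt) (hU'.intervalIntegrable x y),
    intervalIntegral.integral_of_le hxy]
  exact enorm_integral_le_lintegral_enorm _

theorem enorm_sub_sq_le_of_contDiff {μ : Measure ℝ} {w : ℝ → ℝ≥0∞} (hw : Measurable w)
    (hwtop : ∀ᵐ t, w t ≠ ⊤) (hle : volume.withDensity w ≤ μ) {U : ℝ → ℝ} (hU : ContDiff ℝ 1 U)
    {x y : ℝ} (hxy : x ≤ y) (hfin : ∫⁻ t in Ioc x y, (w t)⁻¹ ≠ ⊤) :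
    ‖U y - U x‖ₑ ^ 2 ≤ eLpNorm (deriv U) 2 μ ^ 2 * ∫⁻ t in Ioc x y, (w t)⁻¹ := by
  have hU' : Measurable fun t => ‖deriv U t‖ₑ := (hU.continuous_deriv le_rfl).measurable.enorm
  have hw0 : ∀ᵐ t ∂volume.restrict (Ioc x y), w t ≠ 0 := by
    filter_upwards [ae_lt_top' hw.inv.aemeasurable hfin] with t ht h0
    simp [h0] at ht
  calc ‖U y - U x‖ₑ ^ 2 ≤ (∫⁻ t in Ioc x y, ‖deriv U t‖ₑ) ^ 2 := by
        gcongr; exact enorm_sub_le_lintegral_deriv hU hxy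
    _ ≤ (∫⁻ t in Ioc x y, w t * ‖deriv U t‖ₑ ^ 2) * ∫⁻ t in Ioc x y, (w t)⁻¹ :=
        ENNReal.lintegral_sq_le_lintegral_mul_sq_mul_lintegral_inv hU'.aemeasurable
          hw.aemeasurable hw0 (ae_restrict_of_ae hwtop)
    _ ≤ (∫⁻ t, ‖deriv U t‖ₑ ^ 2 ∂volume.withDensity w) * ∫⁻ t in Ioc x y, (w t)⁻¹ := by
        gcongr ?_ * _
        rw [lintegral_withDensity_eq_lintegral_mul _ hw (hU'.pow_const 2)]
        exact setLIntegral_le_lintegral _ _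
    _ ≤ eLpNorm (deriv U) 2 μ ^ 2 * ∫⁻ t in Ioc x y, (w t)⁻¹ := by
        rw [eLpNorm_two_sq]; gcongr

theorem IsGradient.exists_enorm_sub_sq_le {μ : Measure ℝ} {w : ℝ → ℝ≥0∞} (hw : Measurable w)
    (hwtop : ∀ᵐ t, w t ≠ ⊤) (hle : volume.withDensity w ≤ μ) {u v : ℝ → ℝ}
    (hu : AEStronglyMeasurable u μ) (hv : AEStronglyMeasurable v μ) (h : IsGradient μ u v) :
    ∃ S : Set ℝ, (∀ᵐ x ∂μ, x ∈ S) ∧ ∀ x ∈ S, ∀ y ∈ S, x ≤ y → ∫⁻ t in Ioc x y, (w t)⁻¹ ≠ ⊤ →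
      ‖u y - u x‖ₑ ^ 2 ≤ eLpNorm v 2 μ ^ 2 * ∫⁻ t in Ioc x y, (w t)⁻¹ := by
  obtain ⟨U, hU, hUu, hUv⟩ := h
  obtain ⟨ψ, hψ, hψu⟩ := (tendstoInMeasure_of_tendsto_eLpNorm two_ne_zero
    (fun n => (hU n).continuous.aestronglyMeasurable) hu hUu).exists_seq_tendsto_ae
  refine ⟨{x | Tendsto (fun k => U (ψ k) x) atTop (𝓝 (u x))}, hψu, ?_⟩
  intro x hx y hy hxy hfin
  have hderiv (k : ℕ) : eLpNorm (deriv (U (ψ k))) 2 μ ≤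
      eLpNorm (fun t => deriv (U (ψ k)) t - v t) 2 μ + eLpNorm v 2 μ := by
    have := eLpNorm_add_le (((hU (ψ k)).continuous_deriv le_rfl).aestronglyMeasurable.sub hv)
      hv one_le_two
    rwa [sub_add_cancel] at this
  have hlim : Tendsto (fun k => eLpNorm (fun t => deriv (U (ψ k)) t - v t) 2 μ + eLpNorm v 2 μ)
      atTop (𝓝 (eLpNorm v 2 μ)) := by
    simpa using (hUv.comp hψ.tendsto_atTop).add_const (eLpNorm v 2 μ)
  refine le_of_tendsto_of_tendsto'
    ((((ENNReal.continuous_pow 2).comp continuous_enorm).tendsto _).comp (hy.sub hx))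
    (ENNReal.Tendsto.mul_const (ENNReal.Tendsto.pow hlim) (.inr hfin)) fun k => ?_
  exact (enorm_sub_sq_le_of_contDiff hw hwtop hle (hU (ψ k)) hxy hfin).trans
    (by gcongr; exact hderiv k)

theorem exists_mem_enorm_sq_le_eLpNorm_sq_div {α : Type*} [MeasurableSpace α] {μ : Measure α}
    {g : α → ℝ} {S s : Set α} (hg : AEStronglyMeasurable g μ) (hS : ∀ᵐ x ∂μ, x ∈ S)
    (hs : MeasurableSet s) (hμs : μ s ≠ 0) (hμs_top : μ s ≠ ⊤) :
    ∃ z ∈ S ∩ s, ‖g z‖ₑ ^ 2 ≤ eLpNorm g 2 μ ^ 2 / μ s := by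
  have := isFiniteMeasure_restrict.2 hμs_top
  have hN : μ.restrict s (S ∩ s)ᶜ = 0 :=
    mem_ae_iff.1 (inter_mem (ae_restrict_of_ae hS) (ae_restrict_mem hs))
  obtain ⟨z, hz, hzle⟩ := exists_notMem_null_le_laverage (by simpa using hμs)
    (hg.enorm.pow_const 2).restrict hN
  refine ⟨z, notMem_compl_iff.1 hz, hzle.trans ?_⟩
  rw [setLAverage_eq, eLpNorm_two_sq]
  exact ENNReal.div_le_div_right (setLIntegral_le_lintegral _ _) _

theorem exists_countable_subset_forall_abs_sub_lt {X : Type*} (g : X → ℝ) (T : Set X) :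
    ∃ D ⊆ T, D.Countable ∧ ∀ x ∈ T, ∀ δ > 0, ∃ d ∈ D, |g x - g d| < δ := by
  obtain ⟨c, hcT, hc, hTc⟩ :=
    (TopologicalSpace.IsSeparable.of_separableSpace (g '' T)).exists_countable_dense_subset
  choose pre hpreT hpre using fun y : c => hcT y.2
  have := hc.to_subtype
  refine ⟨range pre, range_subset_iff.2 hpreT, countable_range pre, fun x hx δ hδ => ?_⟩
  obtain ⟨y, hy, hxy⟩ := Metric.mem_closure_iff.1 (hTc (mem_image_of_mem g hx)) δ hδ
  refine ⟨pre ⟨y, hy⟩, mem_range_self _, ?_⟩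
  rwa [hpre, ← Real.dist_eq]

theorem Set.Countable.exists_subseq_tendsto_of_bounded {X : Type*} {D : Set X} (hD : D.Countable)
    {u : ℕ → X → ℝ} (hbdd : ∀ x ∈ D, ∃ B, ∀ n, |u n x| ≤ B) :
    ∃ φ : ℕ → ℕ, StrictMono φ ∧ ∀ x ∈ D, ∃ l, Tendsto (fun k => u (φ k) x) atTop (𝓝 l) := by
  have := hD.to_subtype
  choose B hB using fun x : D => hbdd x x.2
  obtain ⟨L, -, φ, hφ, hL⟩ := (isCompact_univ_pi fun x : D => isCompact_Icc).tendsto_subseq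
    (x := fun n (x : D) => u n x) fun n x _ => abs_le.1 (hB x n)
  exact ⟨φ, hφ, fun x hx => ⟨L ⟨x, hx⟩, tendsto_pi_nhds.1 hL ⟨x, hx⟩⟩⟩

theorem cauchySeq_of_forall_dist_le {α : Type*} [PseudoMetricSpace α] {s : ℕ → α}
    (h : ∀ ε > 0, ∃ t : ℕ → α, CauchySeq t ∧ ∀ k, dist (s k) (t k) ≤ ε) : CauchySeq s := by
  refine Metric.cauchySeq_iff'.2 fun ε hε => ?_
  obtain ⟨t, ht, hst⟩ := h (ε / 3) (by positivity)
  obtain ⟨N, hN⟩ := Metric.cauchySeq_iff'.1 ht (ε / 3) (by positivity)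
  refine ⟨N, fun n hn => ?_⟩
  linarith [dist_triangle4 (s n) (t n) (t N) (s N), hst n, hN n hn, dist_comm (s N) (t N), hst N]

theorem exists_subseq_tendsto_of_equicontinuous_gauge {X ι : Type*} [Countable ι]
    {T : ι → Set X} {g : ι → X → ℝ} {u : ℕ → X → ℝ}
    (hbdd : ∀ i, ∀ x ∈ T i, ∃ B, ∀ n, |u n x| ≤ B)
    (hequi : ∀ i, ∀ ε > 0, ∃ δ > 0, ∀ n, ∀ x ∈ T i, ∀ y ∈ T i,
      |g i x - g i y| < δ → |u n x - u n y| ≤ ε) :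
    ∃ φ : ℕ → ℕ, StrictMono φ ∧ ∀ i, ∀ x ∈ T i, ∃ l, Tendsto (fun k => u (φ k) x) atTop (𝓝 l) := by
  choose D hDT hD hTD using fun i => exists_countable_subset_forall_abs_sub_lt (g i) (T i)
  obtain ⟨φ, hφ, hlim⟩ := (countable_iUnion hD).exists_subseq_tendsto_of_bounded
    (u := u) fun x hx => by
      obtain ⟨i, hi⟩ := mem_iUnion.1 hx
      exact hbdd i x (hDT i hi)
  refine ⟨φ, hφ, fun i x hx => cauchySeq_tendsto_of_complete (cauchySeq_of_forall_dist_le ?_)⟩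
  intro ε hε
  obtain ⟨δ, hδ, hu⟩ := hequi i ε hε
  obtain ⟨d, hd, hxd⟩ := hTD i x hx δ hδ
  obtain ⟨l, hl⟩ := hlim d (mem_iUnion.2 ⟨i, hd⟩)
  exact ⟨fun k => u (φ k) d, hl.cauchySeq, fun k => hu (φ k) x hx d (hDT i hd) hxd⟩

theorem isOpen_setOf_finiteAtFilter_nhds {X : Type*} [TopologicalSpace X] [MeasurableSpace X]
    (ρ : Measure X) : IsOpen {x | ρ.FiniteAtFilter (𝓝 x)} :=
  isOpen_iff_mem_nhds.2 fun _ ⟨s, hs, hρs⟩ => by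
    filter_upwards [eventually_mem_nhds_iff.2 hs] with y hy using ⟨s, hy, hρs⟩

def HolderHalfOn (ρ : Measure ℝ) (C : ℝ≥0∞) (S : Set ℝ) (u : ℝ → ℝ) : Prop :=
  ∀ x ∈ S, ∀ y ∈ S, x ≤ y → ρ (Ioc x y) ≠ ⊤ → ‖u y - u x‖ₑ ^ 2 ≤ C * ρ (Ioc x y)

namespace HolderHalfOn

variable {ρ : Measure ℝ} {C : ℝ≥0∞} {S : Set ℝ} {p q x y : ℝ}

theorem sq_sub_le {u : ℝ → ℝ} (h : HolderHalfOn ρ C S u) (hC : C ≠ ⊤) (hρ : ρ (Ioo p q) ≠ ⊤)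
    (hx : x ∈ S ∩ Ioo p q) (hy : y ∈ S ∩ Ioo p q) (hxy : x ≤ y) :
    (u y - u x) ^ 2 ≤ C.toReal * (ρ (Ioc x y)).toReal := by
  have hfin : ρ (Ioc x y) ≠ ⊤ :=
    ne_top_of_le_ne_top hρ (measure_mono fun t ht => ⟨hx.2.1.trans ht.1, ht.2.trans_lt hy.2.2⟩)
  have := ENNReal.toReal_mono (ENNReal.mul_ne_top hC hfin) (h x hx.1 y hy.1 hxy hfin)
  rwa [ENNReal.toReal_pow, toReal_enorm, Real.norm_eq_abs, sq_abs, ENNReal.toReal_mul] at this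

theorem abs_sub_le_sqrt {u : ℝ → ℝ} (h : HolderHalfOn ρ C S u) (hC : C ≠ ⊤)
    (hρ : ρ (Ioo p q) ≠ ⊤) (hx : x ∈ S ∩ Ioo p q) (hy : y ∈ S ∩ Ioo p q) :
    |u x - u y| ≤ √(C.toReal * |(ρ (Ioc p x)).toReal - (ρ (Ioc p y)).toReal|) := by
  wlog hxy : x ≤ y generalizing x y
  · rw [abs_sub_comm, abs_sub_comm (ρ (Ioc p x)).toReal]
    exact this hy hx (le_of_not_ge hxy)
  have hfin : ∀ {a b}, p ≤ a → b < q → ρ (Ioc a b) ≠ ⊤ := fun hpa hbq =>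
    ne_top_of_le_ne_top hρ (measure_mono fun t ht => ⟨hpa.trans_lt ht.1, ht.2.trans_lt hbq⟩)
  have hadd : ρ (Ioc p y) = ρ (Ioc p x) + ρ (Ioc x y) := by
    rw [← measure_union (Ioc_disjoint_Ioc_of_le le_rfl) measurableSet_Ioc,
      Ioc_union_Ioc_eq_Ioc hx.2.1.le hxy]
  rw [hadd, ENNReal.toReal_add (hfin le_rfl hx.2.2) (hfin hx.2.1.le hy.2.2), sub_add_cancel_left,
    abs_neg, abs_of_nonneg ENNReal.toReal_nonneg]
  exact Real.abs_le_sqrt (by rw [← neg_sub, neg_sq]; exact h.sq_sub_le hC hρ hx hy hxy)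

end HolderHalfOn

section Sequence

variable {μ ρ : Measure ℝ} {u : ℕ → ℝ → ℝ} {C : ℝ≥0∞} {S : Set ℝ} {p q : ℝ}

theorem exists_forall_abs_le_of_holderHalfOn {K : ℝ≥0∞} (h : ∀ n, HolderHalfOn ρ C S (u n))
    (hC : C ≠ ⊤) (hK : K ≠ ⊤) (hρ : ρ (Ioo p q) ≠ ⊤) (hS : ∀ᵐ x ∂μ, x ∈ S)
    (hμ : μ (Ioo p q) ≠ 0) (hμ_top : μ (Ioo p q) ≠ ⊤)
    (hmeas : ∀ n, AEStronglyMeasurable (u n) μ) (hL2 : ∀ n, eLpNorm (u n) 2 μ ^ 2 ≤ K) :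
    ∃ B, ∀ n, ∀ x ∈ S ∩ Ioo p q, |u n x| ≤ B := by
  refine ⟨√(K / μ (Ioo p q)).toReal + √(C.toReal * (ρ (Ioo p q)).toReal), fun n x hx => ?_⟩
  obtain ⟨z, hz, hzle⟩ :=
    exists_mem_enorm_sq_le_eLpNorm_sq_div (hmeas n) hS measurableSet_Ioo hμ hμ_top
  have hz_le : |u n z| ≤ √(K / μ (Ioo p q)).toReal := by
    refine Real.abs_le_sqrt ?_
    have := ENNReal.toReal_mono (ENNReal.div_ne_top hK hμ)
      (hzle.trans (ENNReal.div_le_div_right (hL2 n) _))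
    rwa [ENNReal.toReal_pow, toReal_enorm, Real.norm_eq_abs, sq_abs] at this
  have hgauge : ∀ t ∈ Ioo p q, (ρ (Ioc p t)).toReal ≤ (ρ (Ioo p q)).toReal := fun t ht =>
    ENNReal.toReal_mono hρ (measure_mono fun s hs => ⟨hs.1, hs.2.trans_lt ht.2⟩)
  have hxz : |u n x - u n z| ≤ √(C.toReal * (ρ (Ioo p q)).toReal) := by
    refine ((h n).abs_sub_le_sqrt hC hρ hx hz).trans (Real.sqrt_le_sqrt ?_)
    refine mul_le_mul_of_nonneg_left (abs_sub_le_iff.2 ⟨?_, ?_⟩) ENNReal.toReal_nonneg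
    · linarith [hgauge x hx.2, (ρ (Ioc p z)).toReal_nonneg]
    · linarith [hgauge z hz.2, (ρ (Ioc p x)).toReal_nonneg]
  linarith [abs_sub_abs_le_abs_sub (u n x) (u n z)]

theorem equicontinuous_gauge_of_holderHalfOn (h : ∀ n, HolderHalfOn ρ C S (u n))
    (hC : C ≠ ⊤) (hρ : ρ (Ioo p q) ≠ ⊤) :
    ∀ ε > 0, ∃ δ > 0, ∀ n, ∀ x ∈ S ∩ Ioo p q, ∀ y ∈ S ∩ Ioo p q,
      |(ρ (Ioc p x)).toReal - (ρ (Ioc p y)).toReal| < δ → |u n x - u n y| ≤ ε := by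
  intro ε hε
  refine ⟨ε ^ 2 / (C.toReal + 1), by positivity, fun n x hx y hy hxy => ?_⟩
  refine ((h n).abs_sub_le_sqrt hC hρ hx hy).trans ((Real.sqrt_le_left hε.le).2 ?_)
  calc C.toReal * |(ρ (Ioc p x)).toReal - (ρ (Ioc p y)).toReal|
      ≤ (C.toReal + 1) * (ε ^ 2 / (C.toReal + 1)) := by gcongr; linarith
    _ = ε ^ 2 := by field_simp

theorem exists_subseq_ae_tendsto_of_holderHalfOn [IsFiniteMeasure μ] {K : ℝ≥0∞}
    (h : ∀ n, HolderHalfOn ρ C S (u n)) (hC : C ≠ ⊤) (hK : K ≠ ⊤) (hS : ∀ᵐ x ∂μ, x ∈ S)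
    (hmeas : ∀ n, AEStronglyMeasurable (u n) μ) (hL2 : ∀ n, eLpNorm (u n) 2 μ ^ 2 ≤ K) :
    ∃ φ : ℕ → ℕ, StrictMono φ ∧ ∀ᵐ x ∂μ.restrict {x | ρ.FiniteAtFilter (𝓝 x)},
      ∃ l, Tendsto (fun k => u (φ k) x) atTop (𝓝 l) := by
  let ι := {pq : ℚ × ℚ // ρ (Ioo (pq.1 : ℝ) pq.2) ≠ ⊤ ∧ μ (Ioo (pq.1 : ℝ) pq.2) ≠ 0}
  obtain ⟨φ, hφ, hlim⟩ := exists_subseq_tendsto_of_equicontinuous_gauge (ι := ι)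
    (T := fun i => S ∩ Ioo (i.1.1 : ℝ) i.1.2) (g := fun i t => (ρ (Ioc (i.1.1 : ℝ) t)).toReal)
    (fun i x hx => by
      obtain ⟨B, hB⟩ := exists_forall_abs_le_of_holderHalfOn h hC hK i.2.1 hS i.2.2
        (measure_ne_top μ _) hmeas hL2
      exact ⟨B, fun n => hB n x hx⟩)
    fun i => equicontinuous_gauge_of_holderHalfOn h hC i.2.1
  refine ⟨φ, hφ, ?_⟩
  have hnull : ∀ᵐ x ∂μ, ∀ pq : ℚ × ℚ, μ (Ioo (pq.1 : ℝ) pq.2) = 0 → x ∉ Ioo (pq.1 : ℝ) pq.2 :=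
    ae_all_iff.2 fun pq => (eq_or_ne (μ (Ioo (pq.1 : ℝ) pq.2)) 0).elim
      (fun h0 => (measure_eq_zero_iff_ae_notMem.1 h0).mono fun _ hx _ => hx)
      fun h0 => .of_forall fun _ h0' => absurd h0' h0
  rw [ae_restrict_iff' (isOpen_setOf_finiteAtFilter_nhds ρ).measurableSet]
  filter_upwards [hS, hnull] with x hxS hxnull hxρ
  obtain ⟨t, ⟨ht, hxt⟩, hρt⟩ :=
    hxρ.exists_mem_basis Real.isTopologicalBasis_Ioo_rat.nhds_hasBasis
  simp only [mem_iUnion, mem_singleton_iff] at ht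
  obtain ⟨p, q, -, rfl⟩ := ht
  exact hlim ⟨(p, q), hρt.ne, fun h0 => hxnull (p, q) h0 hxt⟩ x ⟨hxS, hxt⟩

end Sequence

theorem compactness_H1mu_general
    (a b : ℝ) (I : Set ℝ) (hI : I = Set.Ioo a b)
    (μ : Measure ℝ) [IsFiniteMeasure μ]
    (f : ℝ → ℝ) (hfmeas : Measurable f)
    (μs : Measure ℝ)
    (hdecomp : μ = volume.withDensity (fun x => ENNReal.ofReal (f x)) + μs)
    (A : Set ℝ)
    (M : Set ℝ)
    (hM : M = {x ∈ closure I | ∀ ε > 0,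
      ∫⁻ t in I ∩ Set.Ioo (x - ε) (x + ε), (ENNReal.ofReal (f t))⁻¹ = ⊤})
    (V : Set ℝ) (hV : V = I \ (M ∪ A))
    (un vn : ℕ → ℝ → ℝ)
    (hmem : ∀ n, MemLp (un n) 2 μ ∧ MemLp (vn n) 2 μ ∧ IsGradient μ (un n) (vn n))
    (hbound : ∃ C : ℝ≥0∞, C ≠ ⊤ ∧
      ∀ n, eLpNorm (un n) 2 μ ^ 2 + eLpNorm (vn n) 2 μ ^ 2 ≤ C) :
    ∃ φ : ℕ → ℕ, StrictMono φ ∧ ∃ u : ℝ → ℝ,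
      ∀ᵐ x ∂(μ.restrict V), Tendsto (fun k => un (φ k) x) atTop (nhds (u x)) := by
  obtain ⟨C, hC, hbdd⟩ := hbound
  have hle : volume.withDensity (fun x => ENNReal.ofReal (f x)) ≤ μ :=
    hdecomp ▸ Measure.le_add_right le_rfl
  choose S hS hosc using fun n => (hmem n).2.2.exists_enorm_sub_sq_le hfmeas.ennreal_ofReal
    (.of_forall fun _ => ENNReal.ofReal_ne_top) hle (hmem n).1.1 (hmem n).2.1.1
  set ρ := volume.withDensity fun t => (ENNReal.ofReal (f t))⁻¹
  have hholder (n : ℕ) : HolderHalfOn ρ C (⋂ m, S m) (un n) := fun x hx y hy hxy hfin => by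
    rw [withDensity_apply _ measurableSet_Ioc] at hfin ⊢
    exact (hosc n x (mem_iInter.1 hx n) y (mem_iInter.1 hy n) hxy hfin).trans
      (by gcongr; exact le_add_self.trans (hbdd n))
  obtain ⟨φ, hφ, hconv⟩ := exists_subseq_ae_tendsto_of_holderHalfOn hholder hC hC
    ((ae_all_iff.2 hS).mono fun _ => mem_iInter.2) (fun n => (hmem n).1.1)
    fun n => le_self_add.trans (hbdd n)
  have hVρ : V ⊆ {x | ρ.FiniteAtFilter (𝓝 x)} := by
    intro x hx
    obtain ⟨hxI, hxM⟩ := hV ▸ hx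
    obtain ⟨ε, hε, hfin⟩ :
        ∃ ε > 0, ∫⁻ t in I ∩ Ioo (x - ε) (x + ε), (ENNReal.ofReal (f t))⁻¹ ≠ ⊤ := by
      by_contra! h
      exact hxM (.inl (hM ▸ ⟨subset_closure hxI, h⟩))
    subst hI
    refine ⟨_, inter_mem (isOpen_Ioo.mem_nhds hxI)
      (Ioo_mem_nhds (sub_lt_self x hε) (lt_add_of_pos_right x hε)), ?_⟩
    rwa [withDensity_apply _ (measurableSet_Ioo.inter measurableSet_Ioo), lt_top_iff_ne_top]
  exact ⟨φ, hφ, fun x => limUnder atTop fun k => un (φ k) x,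
    (ae_restrict_of_ae_restrict_of_subset hVρ hconv).mono fun _ => tendsto_nhds_limUnder⟩

/-- Compactness in `H¹_μ(I)`: a bounded sequence in `H¹_μ(I)` admits a subsequence
converging pointwise `μ`-a.e. on `V = I \ (M ∪ A)`, i.e. at `μ`-a.e. point where the
tangent space to `μ` is `ℝ`. -/
theorem compactness_H1mu
    (a b : ℝ) (hab : a < b) (I : Set ℝ) (hI : I = Set.Ioo a b)
    (μ : Measure ℝ) [IsFiniteMeasure μ] (hμI : μ Iᶜ = 0)
    (f : ℝ → ℝ) (hfmeas : Measurable f) (hfnonneg : 0 ≤ f)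
    (μs : Measure ℝ) (hsing : μs ⟂ₘ volume)
    (hdecomp : μ = volume.withDensity (fun x => ENNReal.ofReal (f x)) + μs)
    (A : Set ℝ) (hAmeas : MeasurableSet A) (hAI : A ⊆ I)
    (hAnull : volume A = 0) (hconc : μs Aᶜ = 0)
    (M : Set ℝ)
    (hM : M = {x ∈ closure I | ∀ ε > 0,
      ∫⁻ t in I ∩ Set.Ioo (x - ε) (x + ε), (ENNReal.ofReal (f t))⁻¹ = ⊤})
    (V : Set ℝ) (hV : V = I \ (M ∪ A))
    (un vn : ℕ → ℝ → ℝ)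
    (hmem : ∀ n, MemLp (un n) 2 μ ∧ MemLp (vn n) 2 μ ∧ IsGradient μ (un n) (vn n))
    (hbound : ∃ C : ℝ≥0∞, C ≠ ⊤ ∧
      ∀ n, eLpNorm (un n) 2 μ ^ 2 + eLpNorm (vn n) 2 μ ^ 2 ≤ C) :
    ∃ φ : ℕ → ℕ, StrictMono φ ∧ ∃ u : ℝ → ℝ,
      ∀ᵐ x ∂(μ.restrict V), Tendsto (fun k => un (φ k) x) atTop (nhds (u x)) :=
  compactness_H1mu_general a b I hI μ f hfmeas μs hdecomp A M hM V hV un vn hmem hbound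
end

section
/- Let g : (0,1) → (0,∞) be measurable with ∫₀¹ g(t) dt < ∞ and such that ∫_J dt/g(t) = +∞ for every nonempty open subinterval J ⊆ (0,1). Let Ω = (0,1)² and let μ be the measure on Ω with density f(x,y) = g(x) with respect to 𝓛². Then there exists a sequence (u_n) of continuously differentiable functions on Ω such that u_n → π₁ in L²(μ) and ∇u_n → 0 in L²(μ; ℝ²), where π₁(x,y) = x. In particular the zero vector field is a μ-gradient of π₁, so the tangent space to μ is not ℝ² on any set of positive μ-measure. -/
/-!
Since `∫_J 1/g = ∞`, the truncations `h = min (1/g, M)` satisfy `∫_J h² g ≤ ∫_J h` with `∫_J h`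
as large as we like. A continuous approximation of `h` supported in `J`, rescaled to have
integral `|J|`, therefore has arbitrarily small weighted energy `∫_J φ² g`. Gluing such bumps on
the intervals `(k/n, (k+1)/n)` and integrating gives a nondecreasing `C¹` function `uₙ` with
`uₙ (k/n) = k/n`, hence `|uₙ x - x| ≤ 1/n`, while `∫ uₙ'² g ≤ 1/n²`; the functions
`(x, y) ↦ uₙ x` do the job.
-/

open MeasureTheory Filter Set
open scoped ENNReal Topology

theorem abs_max_mul_sub_le {t a b : ℝ} (hb : 0 ≤ b) (ht₀ : 0 ≤ t) (ht₁ : t ≤ 1) :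
    |max (t * a) 0 - b| ≤ |a - b| + (1 - t) * b :=
  calc |max (t * a) 0 - b| = |max (t * a) 0 - max b 0| := by rw [max_eq_left hb]
    _ ≤ |t * a - b| := abs_max_sub_max_le_abs _ _ _
    _ = |t * (a - b) - (1 - t) * b| := by ring_nf
    _ ≤ |t * (a - b)| + |(1 - t) * b| := abs_sub _ _
    _ ≤ |a - b| + (1 - t) * b := by
      rw [abs_mul, abs_of_nonneg ht₀, abs_of_nonneg (mul_nonneg (by linarith) hb)]
      gcongr
      nlinarith [abs_nonneg (a - b)]

section Approximation

variable {α : Type*} [TopologicalSpace α] [T2Space α] [LocallyCompactSpace α] [NormalSpace α]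
  [MeasurableSpace α] [BorelSpace α] {μ : Measure α} [μ.Regular] [IsFiniteMeasure μ]
  {p : ℝ≥0∞} {f : α → ℝ} {U : Set α}

theorem MeasureTheory.MemLp.exists_continuous_nonneg_support_subset_eLpNorm_sub_le (hp₁ : 1 ≤ p)
    (hp : p ≠ ∞) (hf : MemLp f p μ) (hf₀ : 0 ≤ f) (hU : IsOpen U) (hfU : Function.support f ⊆ U)
    {ε : ℝ} (hε : 0 < ε) :
    ∃ φ : α → ℝ, Continuous φ ∧ 0 ≤ φ ∧ Function.support φ ⊆ U ∧
      MemLp φ p μ ∧ eLpNorm (φ - f) p μ ≤ ENNReal.ofReal ε := by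
  -- multiply a continuous approximation by an Urysohn cutoff `ψ` equal to `1` on a compact
  -- `K ⊆ U` outside of which `f` has small `Lᵖ` norm
  obtain ⟨δ, hδ, hfδ⟩ := hf.eLpNorm_indicator_le hp₁ hp (half_pos hε)
  obtain ⟨K, hKU, hK, hUK⟩ := hU.measurableSet.exists_isCompact_sdiff_lt (measure_ne_top μ U)
    (ENNReal.ofReal_pos.2 hδ).ne'
  obtain ⟨ψ, hψU, hψK, hψ⟩ := exists_continuous_zero_one_of_isCompact' hK hU.isClosed_compl
    (disjoint_compl_right_iff_subset.2 hKU)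
  obtain ⟨φ₁, -, hφ₁, hφ₁c, hφ₁p⟩ := hf.exists_hasCompactSupport_eLpNorm_sub_le hp
    (ENNReal.ofReal_pos.2 (half_pos hε)).ne'
  refine ⟨fun x => max (ψ x * φ₁ x) 0, (ψ.continuous.mul hφ₁c).max continuous_const,
    fun x => le_max_right _ _, fun x hx => ?_,
    hφ₁p.mono (by fun_prop) (ae_of_all _ fun x => ?_), ?_⟩
  · by_contra hxU
    simp [hψU hxU] at hx
  · rw [Real.norm_eq_abs, Real.norm_eq_abs, abs_of_nonneg (le_max_right _ _)]
    exact max_le (by nlinarith [(hψ x).1, (hψ x).2, le_abs_self (φ₁ x), neg_abs_le (φ₁ x)])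
      (abs_nonneg _)
  have hcut : ∀ x, (1 - ψ x) * f x ≤ (U \ K).indicator f x := by
    intro x
    by_cases hxK : x ∈ K
    · simp [hψK hxK, indicator_nonneg (fun y _ => hf₀ y)]
    by_cases hxU : x ∈ U
    · rw [indicator_of_mem (show x ∈ U \ K from ⟨hxU, hxK⟩)]
      nlinarith [mul_nonneg (hψ x).1 (hf₀ x)]
    · simp [Function.notMem_support.1 (fun h => hxU (hfU h)), indicator_nonneg (fun y _ => hf₀ y)]
  calc eLpNorm ((fun x => max (ψ x * φ₁ x) 0) - f) p μ
      ≤ eLpNorm (fun x => ‖φ₁ x - f x‖ + (U \ K).indicator f x) p μ := by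
        refine eLpNorm_mono_real fun x => ?_
        have hx := abs_max_mul_sub_le (a := φ₁ x) (hf₀ x) (hψ x).1 (hψ x).2
        rw [Real.norm_eq_abs, Real.norm_eq_abs]
        exact hx.trans (by linarith [hcut x])
    _ ≤ eLpNorm (fun x => ‖φ₁ x - f x‖) p μ + eLpNorm ((U \ K).indicator f) p μ :=
        eLpNorm_add_le (hφ₁c.aestronglyMeasurable.sub hf.aestronglyMeasurable).norm
          (hf.aestronglyMeasurable.indicator (hU.measurableSet.diff hK.measurableSet)) hp₁
    _ ≤ ENNReal.ofReal (ε / 2) + ENNReal.ofReal (ε / 2) := by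
        gcongr
        · rw [eLpNorm_norm, ← Pi.sub_def, eLpNorm_sub_comm]
          exact hφ₁
        · exact hfδ _ (hU.measurableSet.diff hK.measurableSet) hUK.le
    _ = ENNReal.ofReal ε := by rw [← ENNReal.ofReal_add (by linarith) (by linarith)]; ring_nf

end Approximation

theorem exists_lt_lintegral_min_natCast {α : Type*} [MeasurableSpace α] {μ : Measure α}
    {f : α → ℝ≥0∞} (hf : Measurable f) (hμf : ∫⁻ x, f x ∂μ = ∞) {K : ℝ≥0∞} (hK : K < ∞) :
    ∃ M : ℕ, K < ∫⁻ x, min (f x) M ∂μ := by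
  have hsup : ⨆ M : ℕ, ∫⁻ x, min (f x) M ∂μ = ∞ := by
    rw [← lintegral_iSup (fun M => hf.min measurable_const)
      (fun M N hMN x => min_le_min_left _ (by exact_mod_cast hMN))]
    refine (lintegral_congr fun x => ?_).trans hμf
    calc ⨆ M : ℕ, min (f x) (M : ℝ≥0∞) = f x ⊓ ⨆ M : ℕ, (M : ℝ≥0∞) := (inf_iSup_eq _ _).symm
      _ = f x := by rw [ENNReal.iSup_natCast, inf_top_eq]
  exact lt_iSup_iff.1 (hsup ▸ hK)

theorem enorm_integral_le_eLpNorm_two_mul_measure_univ_rpow {α E : Type*} [MeasurableSpace α]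
    [NormedAddCommGroup E] [NormedSpace ℝ E] {μ : Measure α} {f : α → E}
    (hf : AEStronglyMeasurable f μ) :
    ‖∫ x, f x ∂μ‖ₑ ≤ eLpNorm f 2 μ * μ univ ^ (1 / 2 : ℝ) :=
  calc ‖∫ x, f x ∂μ‖ₑ ≤ eLpNorm f 1 μ := by
        rw [eLpNorm_one_eq_lintegral_enorm]; exact enorm_integral_le_lintegral_enorm f
    _ ≤ eLpNorm f 2 μ * μ univ ^ (1 / (1 : ℝ≥0∞).toReal - 1 / (2 : ℝ≥0∞).toReal) :=
        eLpNorm_le_eLpNorm_mul_rpow_measure_univ one_le_two hf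
    _ = eLpNorm f 2 μ * μ univ ^ (1 / 2 : ℝ) := by norm_num

theorem eLpNorm_restrict_withDensity_of_support_subset {α E : Type*} [MeasurableSpace α]
    [NormedAddCommGroup E] {μ : Measure α} {w : α → ℝ≥0∞} {s : Set α} (hs : MeasurableSet s)
    {f : α → E} (hf : Function.support f ⊆ s) (p : ℝ≥0∞) :
    eLpNorm f p ((μ.restrict s).withDensity w) = eLpNorm f p (μ.withDensity w) := by
  rw [← restrict_withDensity hs, eLpNorm_restrict_eq_of_support_subset hf]

theorem Monotone.abs_sub_le_of_eq_on_grid {u : ℝ → ℝ} (hu : Monotone u) {n : ℕ} (hn : 0 < n)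
    (hgrid : ∀ k ≤ n, u (k / n) = k / n) {x : ℝ} (hx : x ∈ Ico 0 1) : |u x - x| ≤ 1 / n := by
  have hn' : (0 : ℝ) < n := by exact_mod_cast hn
  set k := ⌊x * n⌋₊
  have hk : (k : ℝ) ≤ x * n := Nat.floor_le (by nlinarith [hx.1])
  have hk' : x * n < k + 1 := Nat.lt_floor_add_one _
  have hkn : k < n := (Nat.floor_lt (by nlinarith [hx.1])).2 (by nlinarith [hx.2])
  have hlo : u (k / n) ≤ u x := hu ((div_le_iff₀ hn').2 hk)
  have hhi : u x ≤ u ((k + 1 : ℕ) / n) := hu ((le_div_iff₀ hn').2 (by push_cast; linarith))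
  rw [hgrid k hkn.le] at hlo
  rw [hgrid (k + 1) hkn, Nat.cast_add_one] at hhi
  have hxlo : (k : ℝ) / n ≤ x := (div_le_iff₀ hn').2 hk
  have hxhi : x ≤ ((k : ℝ) + 1) / n := (le_div_iff₀ hn').2 hk'.le
  rw [add_div] at hhi hxhi
  rw [abs_le]
  constructor <;> linarith

theorem intervalIntegral_sum_eq_natCast_div {n : ℕ} {φ : Fin n → ℝ → ℝ}
    (hφc : ∀ k, Continuous (φ k))
    (hφI : ∀ k : Fin n, Function.support (φ k) ⊆ Ioo ((k : ℝ) / n) ((k + 1) / n))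
    (hφint : ∀ k : Fin n, ∫ x in Ioo ((k : ℝ) / n) ((k + 1) / n), φ k x = 1 / n) :
    ∀ k ≤ n, ∫ t in (0 : ℝ)..(k / n), ∑ j, φ j t = k / n := by
  set I : ℕ → Set ℝ := fun k => Ioo (k / n) ((k + 1) / n)
  have hdisj : Pairwise fun j k => Disjoint (I j) (I k) := by
    have hmono : Monotone fun k : ℕ => (k : ℝ) / n := fun j k hjk =>
      div_le_div_of_nonneg_right (Nat.cast_le.2 hjk) n.cast_nonneg
    have := hmono.pairwise_disjoint_on_Ioo_succ
    simp only [Order.succ_eq_add_one, Nat.cast_add_one] at this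
    exact this
  have hΦI : ∀ k : Fin n, EqOn (fun x => ∑ j, φ j x) (φ k) (I k) := fun k x hx =>
    Finset.sum_eq_single k (fun j _ hjk => Function.notMem_support.1 fun hj =>
      (hdisj (Fin.val_injective.ne hjk)).ne_of_mem (hφI j hj) hx rfl) (by simp)
  have hΦc : Continuous fun x => ∑ j, φ j x := continuous_finsetSum _ fun j _ => hφc j
  intro k hk
  induction k with
  | zero => simp
  | succ k ih =>
    have hn : (0 : ℝ) < n := by exact_mod_cast (Nat.zero_lt_succ k).trans_le hk
    have hstep : ∫ t in (k / n : ℝ)..((k + 1) / n), ∑ j, φ j t = 1 / n := by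
      rw [intervalIntegral.integral_of_le (by gcongr; linarith), integral_Ioc_eq_integral_Ioo,
        setIntegral_congr_fun measurableSet_Ioo (hΦI ⟨k, hk⟩)]
      exact hφint ⟨k, hk⟩
    rw [Nat.cast_add_one, ← intervalIntegral.integral_add_adjacent_intervals
      (hΦc.intervalIntegrable 0 (k / n)) (hΦc.intervalIntegrable _ _), hstep,
      ih (Nat.le_of_succ_le hk)]
    ring

theorem eLpNorm_comp_fst_prod {α β E : Type*} [MeasurableSpace α] [MeasurableSpace β]
    [NormedAddCommGroup E] {μ : Measure α} {ν : Measure β} [IsProbabilityMeasure ν] {f : α → E}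
    (hf : AEStronglyMeasurable f μ) (p : ℝ≥0∞) :
    eLpNorm (fun x => f x.1) p (μ.prod ν) = eLpNorm f p μ := by
  have hmap : (μ.prod ν).map Prod.fst = μ := by
    rw [Measure.map_fst_prod, measure_univ, one_smul]
  calc eLpNorm (fun x => f x.1) p (μ.prod ν) = eLpNorm f p ((μ.prod ν).map Prod.fst) :=
        (eLpNorm_map_measure (by rwa [hmap]) measurable_fst.aemeasurable).symm
    _ = eLpNorm f p μ := by rw [hmap]

theorem fderiv_comp_fst_apply {v : ℝ → ℝ} {p : ℝ × ℝ} (hv : DifferentiableAt ℝ v p.1)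
    (q : ℝ × ℝ) : fderiv ℝ (fun p : ℝ × ℝ => v p.1) p q = deriv v p.1 * q.1 := by
  have hfst : HasFDerivAt (fun p : ℝ × ℝ => v p.1)
      (deriv v p.1 • ContinuousLinearMap.fst ℝ ℝ ℝ) p :=
    hv.hasDerivAt.comp_hasFDerivAt p hasFDerivAt_fst
  rw [hfst.fderiv]
  simp [mul_comm]

section WeightedEnergy

variable {w : ℝ → ℝ≥0∞} {U : Set ℝ}

theorem exists_setIntegral_gt_eLpNorm_withDensity_le_sqrt (hw : Measurable w)
    (hU : MeasurableSet U) (hUfin : volume U ≠ ∞) (hwU' : ∫⁻ x in U, (w x)⁻¹ = ∞) (K : ℝ) :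
    ∃ h : ℝ → ℝ, Measurable h ∧ 0 ≤ h ∧ (∃ M, ∀ x, h x ≤ M) ∧ Function.support h ⊆ U ∧
      K < ∫ x in U, h x ∧
      eLpNorm h 2 (volume.withDensity w) ≤ ENNReal.ofReal √(∫ x in U, h x) := by
  obtain ⟨M, hM⟩ := exists_lt_lintegral_min_natCast hw.inv hwU'
    (ENNReal.ofReal_lt_top (r := K))
  set H : ℝ → ℝ≥0∞ := fun x => min (w x)⁻¹ M
  have hHM : ∀ x, H x ≤ M := fun x => min_le_right _ _
  have hHtop : ∀ x, H x ≠ ∞ := fun x => ne_top_of_le_ne_top (ENNReal.natCast_ne_top M) (hHM x)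
  have hHm : Measurable H := hw.inv.min measurable_const
  have hHw : ∀ x, H x ^ 2 * w x ≤ H x := fun x =>
    calc H x ^ 2 * w x = H x * (H x * w x) := by ring
      _ ≤ H x * ((w x)⁻¹ * w x) := by gcongr; exact min_le_left _ _
      _ ≤ H x * 1 := by gcongr; exact ENNReal.inv_mul_le_one _
      _ = H x := mul_one _
  have hHint : ∫⁻ x in U, H x ≠ ∞ := by
    refine ne_top_of_le_ne_top (ENNReal.mul_ne_top (ENNReal.natCast_ne_top M) hUfin) ?_
    simpa using setLIntegral_mono' hU (fun x _ => hHM x) (μ := volume)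
  set h : ℝ → ℝ := U.indicator fun x => (H x).toReal
  have hS : ∫ x in U, h x = (∫⁻ x in U, H x).toReal := by
    rw [← integral_toReal hHm.aemeasurable (ae_of_all _ fun x => (hHtop x).lt_top)]
    exact setIntegral_congr_fun hU fun x hx => indicator_of_mem hx _
  have hh₀ : 0 ≤ h := fun x => indicator_nonneg (fun _ _ => ENNReal.toReal_nonneg) x
  refine ⟨h, hHm.ennreal_toReal.indicator hU, hh₀, ⟨M, fun x => ?_⟩, support_indicator_subset, ?_,
    ?_⟩
  · by_cases hx : x ∈ U
    · simpa [h, hx] using ENNReal.toReal_mono (ENNReal.natCast_ne_top M) (hHM x)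
    · simp [h, hx]
  · rw [hS]
    rcases lt_or_ge K 0 with hK | hK
    · exact hK.trans_le ENNReal.toReal_nonneg
    · exact (ENNReal.ofReal_lt_iff_lt_toReal hK hHint).1 hM
  · have hE : ∫⁻ x, ‖h x‖ₑ ^ (2 : ℝ) ∂volume.withDensity w ≤ ENNReal.ofReal (∫ x in U, h x) := by
      rw [hS, ENNReal.ofReal_toReal hHint, lintegral_withDensity_eq_lintegral_mul₀ hw.aemeasurable
        (by fun_prop), ← lintegral_indicator hU]
      refine lintegral_mono fun x => ?_
      by_cases hx : x ∈ U
      · simp only [Pi.mul_apply, h, indicator_of_mem hx, Real.enorm_eq_ofReal ENNReal.toReal_nonneg,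
          ENNReal.ofReal_toReal (hHtop x), ENNReal.rpow_two, mul_comm (w x)]
        exact hHw x
      · simp [h, hx]
    rw [eLpNorm_eq_lintegral_rpow_enorm_toReal two_ne_zero ENNReal.ofNat_ne_top,
      Real.sqrt_eq_rpow, ← ENNReal.ofReal_rpow_of_nonneg (setIntegral_nonneg hU fun x _ => hh₀ x)
        (by norm_num)]
    simpa using ENNReal.rpow_le_rpow hE (by norm_num : (0 : ℝ) ≤ 1 / 2)

theorem exists_continuous_setIntegral_ge_eLpNorm_withDensity_le (hU : IsOpen U)
    (hUfin : volume U ≠ ∞) (hwU : ∫⁻ x in U, w x ≠ ∞) {h : ℝ → ℝ} (hhm : Measurable h)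
    (hh₀ : 0 ≤ h) {M : ℝ} (hhM : ∀ x, h x ≤ M) (hhU : Function.support h ⊆ U) :
    ∃ φ : ℝ → ℝ, Continuous φ ∧ 0 ≤ φ ∧ Function.support φ ⊆ U ∧
      (∫ x in U, h x) - √(volume U).toReal ≤ ∫ x in U, φ x ∧
      eLpNorm φ 2 (volume.withDensity w) ≤ eLpNorm h 2 (volume.withDensity w) + 1 := by
  have : IsFiniteMeasure (volume.restrict U) := isFiniteMeasure_restrict.2 hUfin
  have : IsFiniteMeasure ((volume.restrict U).withDensity w) := isFiniteMeasure_withDensity hwU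
  -- approximating in `L²(dx + w dx)` on `U` controls both the integral and the weighted energy
  set ν := volume.restrict U + (volume.restrict U).withDensity w
  have hhν : MemLp h 2 ν := MemLp.of_bound hhm.aestronglyMeasurable M (ae_of_all _ fun x => by
    rw [Real.norm_eq_abs, abs_of_nonneg (hh₀ x)]; exact hhM x)
  obtain ⟨φ, hφc, hφ₀, hφU, hφν, hφh⟩ :=
    hhν.exists_continuous_nonneg_support_subset_eLpNorm_sub_le one_le_two ENNReal.ofNat_ne_top hh₀
      hU hhU one_pos
  rw [ENNReal.ofReal_one] at hφh
  have hφint : IntegrableOn φ U :=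
    (hφν.mono_measure (Measure.le_add_right le_rfl)).integrable one_le_two
  have hhint : IntegrableOn h U :=
    (hhν.mono_measure (Measure.le_add_right le_rfl)).integrable one_le_two
  refine ⟨φ, hφc, hφ₀, hφU, ?_, ?_⟩
  · have hL1 := enorm_integral_le_eLpNorm_two_mul_measure_univ_rpow (μ := volume.restrict U)
      (f := fun x => h x - φ x) (hhm.aestronglyMeasurable.sub hφc.aestronglyMeasurable)
    rw [integral_sub hhint hφint, Real.enorm_eq_ofReal_abs, Measure.restrict_apply_univ,
      ← ENNReal.ofReal_toReal hUfin, ENNReal.ofReal_rpow_of_nonneg ENNReal.toReal_nonneg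
        (by norm_num), ← Real.sqrt_eq_rpow] at hL1
    have hL2 : eLpNorm (fun x => h x - φ x) 2 (volume.restrict U) ≤ 1 := by
      rw [← Pi.sub_def, eLpNorm_sub_comm]
      exact (eLpNorm_mono_measure _ (Measure.le_add_right le_rfl)).trans hφh
    have := (ENNReal.ofReal_le_ofReal_iff (Real.sqrt_nonneg _)).1
      (hL1.trans (by simpa using mul_le_mul_of_nonneg_right hL2 (by positivity)))
    linarith [le_abs_self ((∫ x in U, h x) - ∫ x in U, φ x)]
  · rw [← eLpNorm_restrict_withDensity_of_support_subset hU.measurableSet hφU,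
      ← eLpNorm_restrict_withDensity_of_support_subset hU.measurableSet hhU, ← add_sub_cancel h φ]
    refine (eLpNorm_add_le hhm.aestronglyMeasurable
      (hφc.aestronglyMeasurable.sub hhm.aestronglyMeasurable) one_le_two).trans ?_
    gcongr
    exact (eLpNorm_mono_measure _ (Measure.le_add_left le_rfl)).trans hφh

theorem exists_continuous_eLpNorm_withDensity_le_mul_setIntegral (hw : Measurable w)
    (hU : IsOpen U) (hUfin : volume U ≠ ∞) (hwU : ∫⁻ x in U, w x ≠ ∞)
    (hwU' : ∫⁻ x in U, (w x)⁻¹ = ∞) {η : ℝ} (hη : 0 < η) :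
    ∃ φ : ℝ → ℝ, Continuous φ ∧ 0 < ∫ x in U, φ x ∧ 0 ≤ φ ∧ Function.support φ ⊆ U ∧
      eLpNorm φ 2 (volume.withDensity w) ≤ ENNReal.ofReal (η * ∫ x in U, φ x) := by
  obtain ⟨h, hhm, hh₀, ⟨M, hhM⟩, hhU, hS, hhE⟩ :=
    exists_setIntegral_gt_eLpNorm_withDensity_le_sqrt hw hU.measurableSet hUfin hwU'
      (max (max 1 (2 * √(volume U).toReal)) (16 / η ^ 2))
  obtain ⟨φ, hφc, hφ₀, hφU, hST, hE⟩ :=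
    exists_continuous_setIntegral_ge_eLpNorm_withDensity_le hU hUfin hwU hhm hh₀ hhM hhU
  set S := ∫ x in U, h x
  obtain ⟨⟨hS₁, hSc⟩, hSη⟩ := max_lt_iff.1 hS |>.imp_left max_lt_iff.1
  have hs : √S ^ 2 = S := Real.sq_sqrt (by linarith)
  have hs4 : 4 ≤ η * √S := by
    have h16 : 16 ≤ (η * √S) ^ 2 := by
      rw [mul_pow, hs, ← div_le_iff₀' (by positivity)]; exact hSη.le
    nlinarith [mul_nonneg hη.le (Real.sqrt_nonneg S)]
  refine ⟨φ, hφc, by linarith, hφ₀, hφU, ?_⟩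
  calc eLpNorm φ 2 (volume.withDensity w) ≤ ENNReal.ofReal √S + ENNReal.ofReal 1 := by
        rw [ENNReal.ofReal_one]; exact hE.trans (by gcongr)
    _ = ENNReal.ofReal (√S + 1) := (ENNReal.ofReal_add (Real.sqrt_nonneg _) zero_le_one).symm
    _ ≤ ENNReal.ofReal (η * ∫ x in U, φ x) := by
        gcongr
        nlinarith [Real.sqrt_nonneg S, Real.one_le_sqrt.2 hS₁.le]

theorem exists_continuous_setIntegral_eq_eLpNorm_withDensity_le (hw : Measurable w)
    (hU : IsOpen U) (hUfin : volume U ≠ ∞) (hwU : ∫⁻ x in U, w x ≠ ∞)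
    (hwU' : ∫⁻ x in U, (w x)⁻¹ = ∞) {c : ℝ} (hc : 0 ≤ c) {ε : ℝ} (hε : 0 < ε) :
    ∃ φ : ℝ → ℝ, Continuous φ ∧ 0 ≤ φ ∧ Function.support φ ⊆ U ∧ ∫ x in U, φ x = c ∧
      eLpNorm φ 2 (volume.withDensity w) ≤ ENNReal.ofReal ε := by
  obtain ⟨φ, hφc, hT, hφ₀, hφU, hE⟩ :=
    exists_continuous_eLpNorm_withDensity_le_mul_setIntegral hw hU hUfin hwU hwU'
      (div_pos hε (by linarith : 0 < c + 1))
  set T := ∫ x in U, φ x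
  refine ⟨(c / T) • φ, continuous_const.smul hφc, fun x => mul_nonneg (by positivity) (hφ₀ x),
    (Function.support_const_smul_subset _ _).trans hφU, ?_, ?_⟩
  · simp only [Pi.smul_apply, smul_eq_mul, integral_const_mul]
    exact div_mul_cancel₀ c hT.ne'
  · calc eLpNorm ((c / T) • φ) 2 (volume.withDensity w)
        ≤ ENNReal.ofReal (c / T) * ENNReal.ofReal (ε / (c + 1) * T) := by
          rw [eLpNorm_const_smul, Real.enorm_of_nonneg (by positivity)]
          gcongr
      _ = ENNReal.ofReal (c * ε / (c + 1)) := by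
          rw [← ENNReal.ofReal_mul (by positivity)]
          congr 1
          field_simp
      _ ≤ ENNReal.ofReal ε := by
          gcongr
          rw [div_le_iff₀ (by linarith)]
          nlinarith

theorem exists_contDiff_abs_sub_le_eLpNorm_deriv_le (hw : Measurable w)
    (hw₀₁ : ∫⁻ x in Ioo 0 1, w x ≠ ∞)
    (hw₀₁' : ∀ a b : ℝ, 0 ≤ a → a < b → b ≤ 1 → ∫⁻ x in Ioo a b, (w x)⁻¹ = ∞)
    {n : ℕ} (hn : 0 < n) :
    ∃ u : ℝ → ℝ, ContDiff ℝ 1 u ∧ (∀ x ∈ Ico 0 1, |u x - x| ≤ 1 / n) ∧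
      eLpNorm (deriv u) 2 (volume.withDensity w) ≤ ENNReal.ofReal (1 / n) := by
  have hn' : (0 : ℝ) < n := by exact_mod_cast hn
  have hpiece : ∀ k : Fin n, ∃ φ : ℝ → ℝ, Continuous φ ∧ 0 ≤ φ ∧
      Function.support φ ⊆ Ioo ((k : ℝ) / n) ((k + 1) / n) ∧
      ∫ x in Ioo ((k : ℝ) / n) ((k + 1) / n), φ x = 1 / n ∧
      eLpNorm φ 2 (volume.withDensity w) ≤ ENNReal.ofReal (1 / n ^ 2) := by
    intro k
    have h₀ : 0 ≤ (k : ℝ) / n := by positivity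
    have hlt : (k : ℝ) / n < (k + 1) / n := by gcongr; linarith
    have h₁ : ((k : ℝ) + 1) / n ≤ 1 := (div_le_one hn').2 (by exact_mod_cast k.2)
    exact exists_continuous_setIntegral_eq_eLpNorm_withDensity_le hw isOpen_Ioo
      measure_Ioo_lt_top.ne
      (ne_top_of_le_ne_top hw₀₁ (lintegral_mono_set (Ioo_subset_Ioo h₀ h₁)))
      (hw₀₁' _ _ h₀ hlt h₁) (by positivity) (by positivity)
  choose φ hφc hφ₀ hφI hφint hφE using hpiece
  set Φ : ℝ → ℝ := ∑ k : Fin n, φ k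
  have hΦ : Φ = fun x => ∑ k : Fin n, φ k x := Finset.sum_fn _ _
  have hΦc : Continuous Φ := hΦ ▸ continuous_finsetSum _ fun k _ => hφc k
  set u : ℝ → ℝ := fun x => ∫ t in 0..x, Φ t
  have hu : ∀ x, HasDerivAt u (Φ x) x := fun x => (hΦc.integral_hasStrictDerivAt 0 x).hasDerivAt
  have hderiv : deriv u = Φ := funext fun x => (hu x).deriv
  have hmono : Monotone u := monotone_of_hasDerivAt_nonneg hu fun x => by
    rw [hΦ]; exact Finset.sum_nonneg fun k _ => hφ₀ k x
  have hgrid : ∀ k ≤ n, u (k / n) = k / n := by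
    simpa only [u, hΦ] using intervalIntegral_sum_eq_natCast_div hφc hφI hφint
  refine ⟨u, contDiff_one_iff_deriv.2 ⟨fun x => (hu x).differentiableAt, hderiv ▸ hΦc⟩,
    fun x hx => hmono.abs_sub_le_of_eq_on_grid hn hgrid hx, ?_⟩
  calc eLpNorm (deriv u) 2 (volume.withDensity w) = eLpNorm Φ 2 (volume.withDensity w) := by
        rw [hderiv]
    _ ≤ ∑ k : Fin n, eLpNorm (φ k) 2 (volume.withDensity w) :=
        eLpNorm_sum_le (fun k _ => (hφc k).aestronglyMeasurable) one_le_two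
    _ ≤ ∑ _k : Fin n, ENNReal.ofReal (1 / n ^ 2) := Finset.sum_le_sum fun k _ => hφE k
    _ = ENNReal.ofReal (1 / n) := by
        rw [Finset.sum_const, Finset.card_univ, Fintype.card_fin, nsmul_eq_mul,
          ← ENNReal.ofReal_natCast, ← ENNReal.ofReal_mul hn'.le]
        congr 1
        field_simp

theorem exists_contDiff_tendsto_eLpNorm_sub_id_deriv (hw : Measurable w)
    (hw₀₁ : ∫⁻ x in Ioo 0 1, w x ≠ ∞)
    (hw₀₁' : ∀ a b : ℝ, 0 ≤ a → a < b → b ≤ 1 → ∫⁻ x in Ioo a b, (w x)⁻¹ = ∞) :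
    ∃ u : ℕ → ℝ → ℝ, (∀ n, ContDiff ℝ 1 (u n)) ∧
      Tendsto (fun n => eLpNorm (fun x => u n x - x) 2
        ((volume.restrict (Ioo 0 1)).withDensity w)) atTop (𝓝 0) ∧
      Tendsto (fun n => eLpNorm (deriv (u n)) 2
        ((volume.restrict (Ioo 0 1)).withDensity w)) atTop (𝓝 0) := by
  set m := (volume.restrict (Ioo (0 : ℝ) 1)).withDensity w with hm_def
  choose u hu hclose hE using fun n : ℕ =>
    exists_contDiff_abs_sub_le_eLpNorm_deriv_le hw hw₀₁ hw₀₁' n.succ_pos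
  have hm : m univ ≠ ∞ := by
    rwa [withDensity_apply _ MeasurableSet.univ, Measure.restrict_univ]
  have hlim : Tendsto (fun n : ℕ => ENNReal.ofReal (1 / (n + 1 : ℕ))) atTop (𝓝 0) := by
    simpa using ENNReal.tendsto_ofReal tendsto_one_div_add_atTop_nhds_zero_nat
  have hlim' : Tendsto (fun n : ℕ => m univ ^ (2 : ℝ≥0∞).toReal⁻¹ *
      ENNReal.ofReal (1 / (n + 1 : ℕ))) atTop (𝓝 0) := by
    simpa using ENNReal.Tendsto.const_mul hlim
      (.inr (ENNReal.rpow_ne_top_of_nonneg (by norm_num) hm))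
  refine ⟨u, hu, tendsto_of_tendsto_of_tendsto_of_le_of_le tendsto_const_nhds hlim'
    (fun _ => by simp) fun n => ?_,
    tendsto_of_tendsto_of_tendsto_of_le_of_le tendsto_const_nhds hlim (fun _ => by simp)
      fun n => ?_⟩
  · refine eLpNorm_le_of_ae_bound ?_
    have : ∀ᵐ x ∂m, x ∈ Ioo (0 : ℝ) 1 :=
      withDensity_absolutelyContinuous _ _ (ae_restrict_mem measurableSet_Ioo)
    filter_upwards [this] with x hx
    exact hclose n x (Ioo_subset_Ico_self hx)
  · refine (eLpNorm_mono_measure _ ?_).trans (hE n)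
    rw [hm_def, ← restrict_withDensity measurableSet_Ioo]
    exact Measure.restrict_le_self

end WeightedEnergy

theorem zero_gradient_of_first_coordinate_general
    (g : ℝ → ℝ) (hgmeas : Measurable g)
    (hgint : ∫⁻ t in Set.Ioo (0:ℝ) 1, ENNReal.ofReal (g t) ≠ ⊤)
    (hginv : ∀ a b : ℝ, 0 ≤ a → a < b → b ≤ 1 →
      ∫⁻ t in Set.Ioo a b, (ENNReal.ofReal (g t))⁻¹ = ⊤)
    (Ω : Set (ℝ × ℝ)) (hΩ : Ω = Set.Ioo (0:ℝ) 1 ×ˢ Set.Ioo (0:ℝ) 1)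
    (μ : Measure (ℝ × ℝ))
    (hμ : μ = (volume.restrict Ω).withDensity (fun p => ENNReal.ofReal (g p.1))) :
    ∃ u : ℕ → ℝ × ℝ → ℝ,
      (∀ n, ContDiffOn ℝ 1 (u n) Ω) ∧
      Tendsto (fun n => eLpNorm (fun p => u n p - p.1) 2 μ) atTop (nhds 0) ∧
      Tendsto (fun n =>
        eLpNorm (fun p => ((fderiv ℝ (u n) p (1, 0), fderiv ℝ (u n) p (0, 1)) : ℝ × ℝ))
          2 μ) atTop (nhds 0) := by
  obtain ⟨v, hv, hv_id, hv_deriv⟩ :=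
    exists_contDiff_tendsto_eLpNorm_sub_id_deriv hgmeas.ennreal_ofReal hgint hginv
  have : IsProbabilityMeasure (volume.restrict (Ioo (0 : ℝ) 1)) := ⟨by simp⟩
  have hμ' : μ = ((volume.restrict (Ioo 0 1)).withDensity fun t => ENNReal.ofReal (g t)).prod
      (volume.restrict (Ioo 0 1)) := by
    rw [hμ, hΩ, prod_withDensity_left hgmeas.ennreal_ofReal, Measure.prod_restrict,
      Measure.volume_eq_prod]
  refine ⟨fun n p => v n p.1, fun n => ((hv n).comp contDiff_fst).contDiffOn,
    hv_id.congr fun n => ?_, hv_deriv.congr fun n => ?_⟩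
  · rw [hμ']
    exact (eLpNorm_comp_fst_prod ((hv n).continuous.sub continuous_id).aestronglyMeasurable _).symm
  · rw [hμ', ← eLpNorm_comp_fst_prod (ν := volume.restrict (Ioo (0 : ℝ) 1))
      ((hv n).continuous_deriv le_rfl).aestronglyMeasurable]
    refine eLpNorm_congr_norm_ae (ae_of_all _ fun p => ?_)
    simp [fderiv_comp_fst_apply ((hv n).differentiable one_ne_zero p.1)]

/-- On `Ω = (0,1)²` with `dμ = g(x) d𝓛²`, where `1/g` is non-integrable on every open
subinterval, the projection `π₁(x,y) = x` admits the zero vector field as `μ`-gradient: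
there are `C¹` functions `uₙ` on `Ω` with `uₙ → π₁` and `∇uₙ → 0` in `L²(μ)`. -/
theorem zero_gradient_of_first_coordinate
    (g : ℝ → ℝ) (hgmeas : Measurable g) (hgpos : ∀ t ∈ Set.Ioo (0:ℝ) 1, 0 < g t)
    (hgint : ∫⁻ t in Set.Ioo (0:ℝ) 1, ENNReal.ofReal (g t) ≠ ⊤)
    (hginv : ∀ a b : ℝ, 0 ≤ a → a < b → b ≤ 1 →
      ∫⁻ t in Set.Ioo a b, (ENNReal.ofReal (g t))⁻¹ = ⊤)
    (Ω : Set (ℝ × ℝ)) (hΩ : Ω = Set.Ioo (0:ℝ) 1 ×ˢ Set.Ioo (0:ℝ) 1)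
    (μ : Measure (ℝ × ℝ))
    (hμ : μ = (volume.restrict Ω).withDensity (fun p => ENNReal.ofReal (g p.1))) :
    ∃ u : ℕ → ℝ × ℝ → ℝ,
      (∀ n, ContDiffOn ℝ 1 (u n) Ω) ∧
      Tendsto (fun n => eLpNorm (fun p => u n p - p.1) 2 μ) atTop (nhds 0) ∧
      Tendsto (fun n =>
        eLpNorm (fun p => ((fderiv ℝ (u n) p (1, 0), fderiv ℝ (u n) p (0, 1)) : ℝ × ℝ))
          2 μ) atTop (nhds 0) :=
  zero_gradient_of_first_coordinate_general g hgmeas hgint hginv Ω hΩ μ hμ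
end

section
/- Let g : (0,1) → (0,∞) be measurable with ∫₀¹ g(t) dt < ∞, let Ω = (0,1)², and let μ be the measure on Ω with density f(x,y) = g(x) with respect to 𝓛². If (u_n) is a sequence of continuously differentiable functions on Ω with u_n → 0 in L²(μ) and ∇u_n → v = (v₁, v₂) in L²(μ; ℝ²), then v₂ = 0 μ-almost everywhere. Consequently the vertical direction ℝ·e₂ is contained in the tangent space to μ at μ-a.e. point. -/
open MeasureTheory Filter Set
open scoped ENNReal

/-!
Since the density depends only on `x`, `μ` is the restriction to `Ω` of a product measure
`m ⊗ dy`, so for a test function `φ` supported in `Ω` integration by parts along vertical lines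
gives `∫ φ ∂₂uₙ dμ = -∫ ∂₂φ uₙ dμ`. On the finite measure `μ`, `L²` convergence implies
convergence of integrals against bounded functions, so in the limit `∫ φ v₂ dμ = 0` for every
such `φ`, and `v₂ = 0` `μ`-a.e. by the fundamental lemma of the calculus of variations.
-/

theorem tendsto_integral_mul_of_tendsto_eLpNorm_sub {α : Type*} [MeasurableSpace α]
    {μ : Measure α} [IsFiniteMeasure μ] {p : ℝ≥0∞} (hp : 1 ≤ p) {φ : α → ℝ} {C : ℝ}
    (hφ : AEStronglyMeasurable φ μ) (hC : ∀ᵐ x ∂μ, ‖φ x‖ ≤ C)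
    {ι : Type*} {l : Filter ι} {F : ι → α → ℝ} {f : α → ℝ}
    (hF : ∀ i, AEStronglyMeasurable (F i) μ) (hf : MemLp f p μ)
    (hFf : Tendsto (fun i => eLpNorm (F i - f) p μ) l (nhds 0)) :
    Tendsto (fun i => ∫ x, φ x * F i x ∂μ) l (nhds (∫ x, φ x * f x ∂μ)) := by
  have hFf_memLp : ∀ᶠ i in l, MemLp (F i - f) p μ := by
    filter_upwards [hFf.eventually (eventually_lt_nhds ENNReal.zero_lt_top)] with i hi
    exact ⟨(hF i).sub hf.1, hi⟩
  have hF_int : ∀ᶠ i in l, Integrable (fun x => φ x * F i x) μ := by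
    filter_upwards [hFf_memLp] with i hi
    simpa using ((hi.add hf).integrable hp).bdd_mul hφ hC
  set c := μ univ ^ (1 / (1 : ℝ≥0∞).toReal - 1 / p.toReal)
  have hc : c ≠ ⊤ := by
    refine ENNReal.rpow_ne_top_of_nonneg ?_ (measure_ne_top μ univ)
    rcases eq_or_ne p ⊤ with rfl | hp_top
    · simp
    have : 1 ≤ p.toReal := ENNReal.toReal_one ▸ ENNReal.toReal_mono hp_top hp
    simpa using inv_le_one_of_one_le₀ this
  have hbound : ∀ i, eLpNorm ((fun x => φ x * F i x) - fun x => φ x * f x) 1 μ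
      ≤ ENNReal.ofReal C * (eLpNorm (F i - f) p μ * c) := fun i =>
    calc eLpNorm ((fun x => φ x * F i x) - fun x => φ x * f x) 1 μ
        ≤ ENNReal.ofReal C * eLpNorm (F i - f) 1 μ := by
          refine eLpNorm_le_mul_eLpNorm_of_ae_le_mul ?_ 1
          filter_upwards [hC] with x hx
          simpa [← mul_sub, abs_mul] using
            mul_le_mul_of_nonneg_right hx (abs_nonneg (F i x - f x))
      _ ≤ ENNReal.ofReal C * (eLpNorm (F i - f) p μ * c) :=
          mul_le_mul_right (eLpNorm_le_eLpNorm_mul_rpow_measure_univ hp ((hF i).sub hf.1)) _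
  have hlim : Tendsto (fun i => ENNReal.ofReal C * (eLpNorm (F i - f) p μ * c)) l (nhds 0) := by
    simpa using ENNReal.Tendsto.const_mul (ENNReal.Tendsto.mul_const hFf (Or.inr hc))
      (Or.inr ENNReal.ofReal_ne_top)
  exact tendsto_integral_of_L1' _ ((hf.integrable hp).bdd_mul hφ hC).1 hF_int
    (tendsto_of_tendsto_of_tendsto_of_le_of_le tendsto_const_nhds hlim (fun _ => zero_le) hbound)

theorem integral_prod_volume_eq_zero_of_hasDerivAt_snd {X F : Type*} [MeasurableSpace X]
    [NormedAddCommGroup F] [NormedSpace ℝ F] {m : Measure X} [SFinite m] {ψ ψ' : X × ℝ → F}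
    (hderiv : ∀ p : X × ℝ, HasDerivAt (fun t => ψ (p.1, t)) (ψ' p) p.2)
    (hψ : ∀ x, Integrable fun t => ψ (x, t)) (hψ' : Integrable ψ' (m.prod volume)) :
    ∫ p, ψ' p ∂(m.prod volume) = 0 := by
  rw [integral_prod _ hψ']
  refine integral_eq_zero_of_ae ?_
  filter_upwards [hψ'.prod_right_ae] with x hx
  exact integral_eq_zero_of_hasDerivAt_of_integrable (fun t => hderiv (x, t)) hx (hψ x)

theorem continuous_mul_of_tsupport_subset {X : Type*} [TopologicalSpace X] {U : Set X}
    {u φ : X → ℝ} (hU : IsOpen U) (hu : ContinuousOn u U) (hφ : Continuous φ)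
    (hφU : tsupport φ ⊆ U) : Continuous fun x => φ x * u x :=
  (hφ.continuousOn.mul hu).continuous_of_tsupport_subset hU
    (tsupport_mul_subset_left.trans hφU)

theorem hasFDerivAt_mul_of_tsupport_subset {E : Type*} [NormedAddCommGroup E] [NormedSpace ℝ E]
    {U : Set E} {u φ : E → ℝ} (hU : IsOpen U) (hu : DifferentiableOn ℝ u U)
    (hφ : Differentiable ℝ φ) (hφU : tsupport φ ⊆ U) (x : E) :
    HasFDerivAt (fun y => φ y * u y) (φ x • fderiv ℝ u x + u x • fderiv ℝ φ x) x := by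
  by_cases hx : x ∈ tsupport φ
  · exact (hφ x).hasFDerivAt.mul
      ((hu x (hφU hx)).differentiableAt (hU.mem_nhds (hφU hx))).hasFDerivAt
  · have hψ : x ∉ tsupport fun y => φ y * u y := fun h => hx (tsupport_mul_subset_left h)
    simpa [image_eq_zero_of_notMem_tsupport hx, fderiv_of_notMem_tsupport ℝ hx] using
      HasFDerivAt.of_notMem_tsupport ℝ hψ

theorem integral_mul_fderiv_snd_eq_neg {E : Type*} [NormedAddCommGroup E] [NormedSpace ℝ E]
    [MeasurableSpace E] [OpensMeasurableSpace E] {m : Measure E} [SFinite m]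
    {Ω : Set (E × ℝ)} (hΩ : IsOpen Ω) {μ : Measure (E × ℝ)} (hμ : μ = (m.prod volume).restrict Ω)
    [IsFiniteMeasure μ] {u φ : E × ℝ → ℝ} (hu : ContDiffOn ℝ 1 u Ω) (hφ : ContDiff ℝ 1 φ)
    (hφc : HasCompactSupport φ) (hφΩ : tsupport φ ⊆ Ω) :
    ∫ p, φ p * fderiv ℝ u p (0, 1) ∂μ = -∫ p, fderiv ℝ φ p (0, 1) * u p ∂μ := by
  have h₁ : Continuous fun p => φ p * fderiv ℝ u p (0, 1) :=
    continuous_mul_of_tsupport_subset hΩ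
      ((hu.continuousOn_fderiv_of_isOpen hΩ le_rfl).clm_apply continuousOn_const)
      hφ.continuous hφΩ
  have h₂ : Continuous fun p => fderiv ℝ φ p (0, 1) * u p := by
    simpa only [mul_comm] using continuous_mul_of_tsupport_subset hΩ hu.continuousOn
      ((hφ.continuous_fderiv one_ne_zero).clm_apply continuous_const)
      ((tsupport_fderiv_apply_subset ℝ _).trans hφΩ)
  have h₁_int : Integrable (fun p => φ p * fderiv ℝ u p (0, 1)) μ :=
    h₁.integrable_of_hasCompactSupport hφc.mul_right
  have h₂_int : Integrable (fun p => fderiv ℝ φ p (0, 1) * u p) μ :=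
    h₂.integrable_of_hasCompactSupport (hφc.fderiv_apply ℝ (0, 1)).mul_right
  set ψ' : E × ℝ → ℝ := fun p => φ p * fderiv ℝ u p (0, 1) + fderiv ℝ φ p (0, 1) * u p
  have hψ'_zero (p : E × ℝ) (hp : p ∉ Ω) : ψ' p = 0 := by
    have hp' : p ∉ tsupport φ := fun h => hp (hφΩ h)
    simp [ψ', image_eq_zero_of_notMem_tsupport hp', fderiv_of_notMem_tsupport ℝ hp']
  have hderiv (p : E × ℝ) : HasDerivAt (fun t => φ (p.1, t) * u (p.1, t)) (ψ' p) p.2 := by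
    refine ((hasFDerivAt_mul_of_tsupport_subset hΩ (hu.differentiableOn one_ne_zero)
      (hφ.differentiable one_ne_zero) hφΩ p).comp_hasDerivAt p.2
      ((hasDerivAt_const p.2 p.1).prodMk (hasDerivAt_id p.2))).congr_deriv ?_
    simp [ψ', mul_comm]
  have hψ_int (x : E) : Integrable fun t => φ (x, t) * u (x, t) := by
    have hψc : HasCompactSupport fun p => φ p * u p := hφc.mul_right
    refine ((continuous_mul_of_tsupport_subset hΩ hu.continuousOn hφ.continuous hφΩ).comp
      (Continuous.prodMk_right x)).integrable_of_hasCompactSupport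
      (HasCompactSupport.intro (hψc.image continuous_snd) fun t ht => ?_)
    exact image_eq_zero_of_notMem_tsupport (f := fun p => φ p * u p)
      fun h => ht ⟨(x, t), h, rfl⟩
  have hψ' : ∫ p, ψ' p ∂μ = 0 := by
    have hψ'_on : IntegrableOn ψ' Ω (m.prod volume) := by
      rw [IntegrableOn, ← hμ]
      exact h₁_int.add h₂_int
    rw [hμ, setIntegral_eq_integral_of_forall_compl_eq_zero hψ'_zero]
    exact integral_prod_volume_eq_zero_of_hasDerivAt_snd (ψ := fun p => φ p * u p) hderiv
      hψ_int (hψ'_on.integrable_of_forall_notMem_eq_zero hψ'_zero)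
  rw [integral_add h₁_int h₂_int] at hψ'
  linarith

theorem integral_mul_eq_zero_of_tendsto_fderiv_snd {E : Type*} [NormedAddCommGroup E]
    [NormedSpace ℝ E] [MeasurableSpace E] [OpensMeasurableSpace E] {m : Measure E} [SFinite m]
    {Ω : Set (E × ℝ)} (hΩ : IsOpen Ω) {μ : Measure (E × ℝ)} (hμ : μ = (m.prod volume).restrict Ω)
    [IsFiniteMeasure μ] {p : ℝ≥0∞} (hp : 1 ≤ p) {ι : Type*} {l : Filter ι} [l.NeBot]
    {u : ι → E × ℝ → ℝ} (hu : ∀ i, ContDiffOn ℝ 1 (u i) Ω)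
    (hu_lim : Tendsto (fun i => eLpNorm (u i) p μ) l (nhds 0)) {w : E × ℝ → ℝ} (hw : MemLp w p μ)
    (hdu_lim : Tendsto (fun i => eLpNorm (fun x => fderiv ℝ (u i) x (0, 1) - w x) p μ) l (nhds 0))
    {φ : E × ℝ → ℝ} (hφ : ContDiff ℝ 1 φ) (hφc : HasCompactSupport φ) (hφΩ : tsupport φ ⊆ Ω) :
    ∫ x, φ x * w x ∂μ = 0 := by
  obtain ⟨C, hC⟩ := hφc.exists_bound_of_continuous hφ.continuous
  obtain ⟨C', hC'⟩ := (hφc.fderiv_apply ℝ (0, 1)).exists_bound_of_continuous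
    ((hφ.continuous_fderiv one_ne_zero).clm_apply continuous_const)
  have hu_meas (i : ι) : AEStronglyMeasurable (u i) μ := by
    rw [hμ]
    exact (hu i).continuousOn.aestronglyMeasurable hΩ.measurableSet
  have h_lim₁ := tendsto_integral_mul_of_tendsto_eLpNorm_sub hp
    hφ.continuous.aestronglyMeasurable (Eventually.of_forall hC)
    (fun i => (measurable_fderiv_apply_const ℝ (u i) (0, 1)).aestronglyMeasurable) hw hdu_lim
  have h_lim₂ := tendsto_integral_mul_of_tendsto_eLpNorm_sub hp
    (measurable_fderiv_apply_const ℝ φ (0, 1)).aestronglyMeasurable (Eventually.of_forall hC')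
    hu_meas MemLp.zero (by simpa using hu_lim)
  have h_ibp (i : ι) := integral_mul_fderiv_snd_eq_neg hΩ hμ (hu i) hφ hφc hφΩ
  simp only [h_ibp] at h_lim₁
  exact tendsto_nhds_unique h_lim₁ (by simpa using h_lim₂.neg)

theorem second_component_of_gradient_of_zero_vanishes_general
    (g : ℝ → ℝ) (hgmeas : Measurable g)
    (hgint : ∫⁻ t in Set.Ioo (0:ℝ) 1, ENNReal.ofReal (g t) ≠ ⊤)
    (Ω : Set (ℝ × ℝ)) (hΩ : Ω = Set.Ioo (0:ℝ) 1 ×ˢ Set.Ioo (0:ℝ) 1)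
    (μ : Measure (ℝ × ℝ))
    (hμ : μ = (volume.restrict Ω).withDensity (fun p => ENNReal.ofReal (g p.1)))
    (v : ℝ × ℝ → ℝ × ℝ) (hv : MemLp v 2 μ)
    (u : ℕ → ℝ × ℝ → ℝ) (hu : ∀ n, ContDiffOn ℝ 1 (u n) Ω)
    (hu0 : Tendsto (fun n => eLpNorm (u n) 2 μ) atTop (nhds 0))
    (hugrad : Tendsto (fun n =>
      eLpNorm (fun p => ((fderiv ℝ (u n) p (1, 0), fderiv ℝ (u n) p (0, 1)) : ℝ × ℝ) - v p)
        2 μ) atTop (nhds 0)) :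
    ∀ᵐ p ∂μ, (v p).2 = 0 := by
  have hΩ_open : IsOpen Ω := hΩ ▸ isOpen_Ioo.prod isOpen_Ioo
  set m := volume.withDensity fun t => ENNReal.ofReal (g t)
  have hμ_prod : μ = (m.prod volume).restrict Ω := by
    rw [hμ, Measure.volume_eq_prod, ← restrict_withDensity hΩ_open.measurableSet,
      ← prod_withDensity_left hgmeas.ennreal_ofReal]
  have : IsFiniteMeasure μ := ⟨by
    rw [hμ_prod, Measure.restrict_apply_univ, hΩ, Measure.prod_prod,
      withDensity_apply _ measurableSet_Ioo, Real.volume_Ioo]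
    simpa using hgint.lt_top⟩
  have hdv₂ : Tendsto (fun n => eLpNorm (fun p => fderiv ℝ (u n) p (0, 1) - (v p).2) 2 μ)
      atTop (nhds 0) :=
    tendsto_of_tendsto_of_tendsto_of_le_of_le tendsto_const_nhds hugrad (fun _ => zero_le)
      fun n => eLpNorm_mono fun p =>
        norm_snd_le ((fderiv ℝ (u n) p (1, 0), fderiv ℝ (u n) p (0, 1)) - v p)
  have hΩ_ae : ∀ᵐ p ∂μ, p ∈ Ω := hμ_prod ▸ ae_restrict_mem hΩ_open.measurableSet
  filter_upwards [hΩ_open.ae_eq_zero_of_integral_contDiff_smul_eq_zero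
    (hv.snd.integrable one_le_two).integrableOn.locallyIntegrableOn
    fun φ hφ hφc hφΩ => integral_mul_eq_zero_of_tendsto_fderiv_snd hΩ_open hμ_prod one_le_two
      hu hu0 hv.snd hdv₂ (hφ.of_le (by norm_num)) hφc hφΩ, hΩ_ae] with p hp hpΩ
  exact hp hpΩ

/-- On `Ω = (0,1)²` with `dμ = g(x) d𝓛²` (density depending only on the first variable),
any `μ`-gradient `v = (v₁, v₂)` of `0` has vanishing second component `μ`-a.e.
Consequently `ℝ·e₂ ⊆ T_μ(x)` for `μ`-a.e. `x`. -/
theorem second_component_of_gradient_of_zero_vanishes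
    (g : ℝ → ℝ) (hgmeas : Measurable g) (hgpos : ∀ t ∈ Set.Ioo (0:ℝ) 1, 0 < g t)
    (hgint : ∫⁻ t in Set.Ioo (0:ℝ) 1, ENNReal.ofReal (g t) ≠ ⊤)
    (Ω : Set (ℝ × ℝ)) (hΩ : Ω = Set.Ioo (0:ℝ) 1 ×ˢ Set.Ioo (0:ℝ) 1)
    (μ : Measure (ℝ × ℝ))
    (hμ : μ = (volume.restrict Ω).withDensity (fun p => ENNReal.ofReal (g p.1)))
    (v : ℝ × ℝ → ℝ × ℝ) (hv : MemLp v 2 μ)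
    (u : ℕ → ℝ × ℝ → ℝ) (hu : ∀ n, ContDiffOn ℝ 1 (u n) Ω)
    (hu0 : Tendsto (fun n => eLpNorm (u n) 2 μ) atTop (nhds 0))
    (hugrad : Tendsto (fun n =>
      eLpNorm (fun p => ((fderiv ℝ (u n) p (1, 0), fderiv ℝ (u n) p (0, 1)) : ℝ × ℝ) - v p)
        2 μ) atTop (nhds 0)) :
    ∀ᵐ p ∂μ, (v p).2 = 0 :=
  second_component_of_gradient_of_zero_vanishes_general g hgmeas hgint Ω hΩ μ hμ v hv u hu hu0
    hugrad
end

section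
/- Let A ⊆ I be a Borel set with 𝓛¹(A) = 0. Then there exists a sequence (u_n) of continuously differentiable functions on I such that u_n → 0 in L²(μ) and u_n' → 𝟙_A in L²(μ), where 𝟙_A is the indicator function of A. In particular 𝟙_A ∈ Γ(0), so the tangent space to μ is {0} μ-a.e. on any Lebesgue-negligible set, in particular on the set carrying the singular part of μ. -/
open MeasureTheory Filter Set
open scoped ENNReal Interval

/-!
Take a closed `K ⊆ A` carrying all but a little of the `μ`-mass of `A`. Since `𝓛¹(K) = 0`, `K` lies
in an open `U` of small Lebesgue measure, and Urysohn's lemma gives a continuous `g` with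
`|g| ≤ 1`, `g = 1` on `K` and `g = 0` off `U`, so `g` is close to `𝟙_A` in `L²(μ)`. The primitive
`u = ∫₀ˣ g` is `C¹` with `u' = g` and `|u| ≤ 𝓛¹(U)` everywhere, hence `u` is small in `L²(μ)` because
`μ` is finite.
-/

section Approximation

variable {X E : Type*} [TopologicalSpace X] [NormalSpace X] [MeasurableSpace X] [BorelSpace X]
  [NormedAddCommGroup E] [NormedSpace ℝ E] {p : ℝ≥0∞}

theorem exists_continuous_eLpNorm_sub_indicator_le_of_measure_zero (μ ν : Measure X)
    [IsFiniteMeasure μ] [μ.WeaklyRegular] [ν.OuterRegular] {A : Set X} (hA : MeasurableSet A)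
    (hνA : ν A = 0) (hp₁ : 1 ≤ p) (hp : p ≠ ∞) (c : E) {ε : ℝ≥0∞} (hε : ε ≠ 0) :
    ∃ (g : X → E) (U : Set X), Continuous g ∧ (∀ x, ‖g x‖ ≤ ‖c‖) ∧ Function.support g ⊆ U ∧
      IsOpen U ∧ ν U < ε ∧ eLpNorm (fun x => g x - A.indicator (fun _ => c) x) p μ ≤ ε := by
  have hε₂ : ε / 2 ≠ 0 := (ENNReal.half_pos hε).ne'
  obtain ⟨η, hη, hηA⟩ := exists_eLpNorm_indicator_le (μ := μ) hp c hε₂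
  obtain ⟨K, hKA, hK, hAK⟩ :=
    hA.exists_isClosed_sdiff_lt (measure_ne_top μ A) (ENNReal.coe_ne_zero.2 hη.ne')
  obtain ⟨U, hKU, hU, hνU⟩ := K.exists_isOpen_lt_of_lt ε
    (by rw [measure_mono_null hKA hνA]; exact pos_iff_ne_zero.2 hε)
  obtain ⟨g, hg, hgK, hgc, hgU, hgp⟩ :=
    exists_continuous_eLpNorm_sub_le_of_closed hp hK hU hKU (measure_ne_top μ K) c hε₂
  refine ⟨g, U, hg, hgc, hgU, hU, hνU, ?_⟩
  have hsplit : (fun x => g x - A.indicator (fun _ => c) x) =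
      (fun x => g x - K.indicator (fun _ => c) x) - (A \ K).indicator fun _ => c := by
    ext x
    rw [indicator_sdiff hKA, Pi.sub_apply, Pi.sub_apply, sub_sub_sub_cancel_right]
  calc eLpNorm (fun x => g x - A.indicator (fun _ => c) x) p μ
      ≤ eLpNorm (fun x => g x - K.indicator (fun _ => c) x) p μ
        + eLpNorm ((A \ K).indicator fun _ => c) p μ := by
        rw [hsplit]
        exact eLpNorm_sub_le
          (hgp.aestronglyMeasurable.sub (aestronglyMeasurable_const.indicator hK.measurableSet))
          (aestronglyMeasurable_const.indicator (hA.diff hK.measurableSet)) hp₁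
    _ ≤ ε / 2 + ε / 2 := add_le_add hgK (hηA _ hAK.le)
    _ = ε := ENNReal.add_halves ε

end Approximation

section Primitive

variable {E : Type*} [NormedAddCommGroup E] [NormedSpace ℝ E]

theorem Continuous.contDiff_one_intervalIntegral [CompleteSpace E] {f : ℝ → E}
    (hf : Continuous f) (a : ℝ) :
    ContDiff ℝ 1 fun x => ∫ t in a..x, f t :=
  contDiff_one_iff_deriv.2
    ⟨fun x => (hf.integral_hasStrictDerivAt a x).hasDerivAt.differentiableAt,
      by rwa [funext (hf.deriv_integral f a)]⟩

theorem norm_intervalIntegral_le_of_support_subset (ν : Measure ℝ) {f : ℝ → E} {U : Set ℝ}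
    {C : ℝ} (hU : MeasurableSet U) (hνU : ν U ≠ ∞) (hfC : ∀ x, ‖f x‖ ≤ C)
    (hfU : Function.support f ⊆ U) (a b : ℝ) :
    ‖∫ t in a..b, f t ∂ν‖ ≤ C * ν.real U := by
  have hbound : ∀ t, ‖f t‖ ≤ U.indicator (fun _ => C) t := fun t => by
    by_cases ht : t ∈ U
    · simp [ht, hfC]
    · simp [ht, Function.notMem_support.1 fun h => ht (hfU h)]
  have hint : Integrable (U.indicator fun _ => C) ν :=
    (integrable_indicator_iff hU).2 (integrableOn_const hνU)
  calc ‖∫ t in a..b, f t ∂ν‖ ≤ ∫ t in Ι a b, ‖f t‖ ∂ν :=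
        intervalIntegral.norm_integral_le_integral_norm_uIoc
    _ ≤ ∫ t in Ι a b, U.indicator (fun _ => C) t ∂ν :=
        integral_mono_of_nonneg (ae_of_all _ fun _ => norm_nonneg _) hint.integrableOn
          (ae_of_all _ hbound)
    _ ≤ ∫ t, U.indicator (fun _ => C) t ∂ν :=
        setIntegral_le_integral hint (ae_of_all _ fun t => (norm_nonneg _).trans (hbound t))
    _ = C * ν.real U := by rw [integral_indicator_const _ hU, smul_eq_mul, mul_comm]

end Primitive

theorem indicator_of_null_set_is_gradient_of_zero_general
    (μ : Measure ℝ) [IsFiniteMeasure μ]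
    (A : Set ℝ) (hAmeas : MeasurableSet A) (hAnull : volume A = 0) :
    ∃ u : ℕ → ℝ → ℝ, (∀ n, ContDiff ℝ 1 (u n)) ∧
      Tendsto (fun n => eLpNorm (u n) 2 μ) atTop (nhds 0) ∧
      Tendsto (fun n =>
        eLpNorm (fun x => deriv (u n) x - Set.indicator A (fun _ => (1:ℝ)) x) 2 μ)
        atTop (nhds 0) := by
  choose g U hg hg₁ hgU hU hUn hgA using fun n : ℕ =>
    exists_continuous_eLpNorm_sub_indicator_le_of_measure_zero μ volume hAmeas hAnull
      one_le_two ENNReal.ofNat_ne_top (1 : ℝ) (ε := (n : ℝ≥0∞)⁻¹) (by simp)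
  have hprim_le : ∀ n x, ‖∫ t in 0..x, g n t‖ ≤ volume.real (U n) := fun n x => by
    simpa using norm_intervalIntegral_le_of_support_subset volume (hU n).measurableSet
      (hUn n).ne_top (hg₁ n) (hgU n) 0 x
  refine ⟨fun n x => ∫ t in 0..x, g n t, fun n => (hg n).contDiff_one_intervalIntegral 0, ?_, ?_⟩
  · have hlim : Tendsto (fun n : ℕ => μ univ ^ (2 : ℝ≥0∞).toReal⁻¹ * (n : ℝ≥0∞)⁻¹) atTop
        (nhds 0) := by
      simpa using ENNReal.Tendsto.const_mul ENNReal.tendsto_inv_nat_nhds_zero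
        (Or.inr (by finiteness))
    refine tendsto_of_tendsto_of_tendsto_of_le_of_le tendsto_const_nhds hlim (fun _ => zero_le)
      fun n => (eLpNorm_le_of_ae_bound (ae_of_all _ (hprim_le n))).trans ?_
    gcongr
    exact ENNReal.ofReal_toReal_le.trans (hUn n).le
  · simp_rw [(hg _).deriv_integral]
    exact tendsto_of_tendsto_of_tendsto_of_le_of_le tendsto_const_nhds
      ENNReal.tendsto_inv_nat_nhds_zero (fun _ => zero_le) hgA

/-- The indicator of any Lebesgue-null Borel set `A ⊆ I` is a `μ`-gradient of `0`:
there are `C¹` functions `uₙ` with `uₙ → 0` and `uₙ' → 𝟙_A` in `L²(μ)`. In particular the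
tangent space to `μ` is `{0}` `μ`-a.e. on the set carrying the singular part of `μ`. -/
theorem indicator_of_null_set_is_gradient_of_zero
    (a b : ℝ) (hab : a < b) (I : Set ℝ) (hI : I = Set.Ioo a b)
    (μ : Measure ℝ) [IsFiniteMeasure μ] (hμI : μ Iᶜ = 0)
    (A : Set ℝ) (hAmeas : MeasurableSet A) (hAI : A ⊆ I) (hAnull : volume A = 0) :
    ∃ u : ℕ → ℝ → ℝ, (∀ n, ContDiff ℝ 1 (u n)) ∧
      Tendsto (fun n => eLpNorm (u n) 2 μ) atTop (nhds 0) ∧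
      Tendsto (fun n =>
        eLpNorm (fun x => deriv (u n) x - Set.indicator A (fun _ => (1:ℝ)) x) 2 μ)
        atTop (nhds 0) :=
  indicator_of_null_set_is_gradient_of_zero_general μ A hAmeas hAnull
end

section
/- Let u ∈ H¹_μ(I) and v ∈ Γ(u). Then the restriction of u to U = I \ M has a weak (distributional) derivative u' on U, u' coincides with v almost everywhere on U with respect to the measure f·𝓛¹, and ∫_U (u')² f < ∞. In particular all μ-gradients of u coincide μ-a.e. on V = I \ (M ∪ A). -/
open MeasureTheory Filter Set
open scoped ENNReal

lemma aux_fpos {f : ℝ → ℝ} (hfmeas : Measurable f) {K : Set ℝ}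
    (hfin : ∫⁻ x in K, (ENNReal.ofReal (f x))⁻¹ ≠ ⊤) :
    ∀ᵐ x ∂(volume.restrict K), 0 < f x := by
  have h := ae_lt_top (μ := volume.restrict K) (hfmeas.ennreal_ofReal.inv) hfin
  filter_upwards [h] with x hx
  have h0 : ENNReal.ofReal (f x) ≠ 0 := by
    intro h0
    simp only [Pi.inv_apply, h0] at hx
    simp at hx
  exact ENNReal.ofReal_pos.mp (pos_iff_ne_zero.mpr h0)

lemma aux_ac {f : ℝ → ℝ} (hfmeas : Measurable f) {K : Set ℝ}
    (hfK : ∀ᵐ x ∂(volume.restrict K), 0 < f x) :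
    volume.restrict K ≪ volume.withDensity fun x => ENNReal.ofReal (f x) := by
  refine Measure.AbsolutelyContinuous.mk fun s hs hνs => ?_
  rw [withDensity_apply _ hs, lintegral_eq_zero_iff hfmeas.ennreal_ofReal] at hνs
  -- hνs : (fun x => ENNReal.ofReal (f x)) =ᵐ[volume.restrict s] 0
  set T : Set ℝ := {x | 0 < f x} with hT
  have hTm : MeasurableSet T := measurableSet_lt measurable_const hfmeas
  have h1 : volume (s ∩ T) = 0 := by
    have : ∀ᵐ x ∂(volume.restrict s), x ∉ T := by
      filter_upwards [hνs] with x hx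
      simp only [Pi.zero_apply, ENNReal.ofReal_eq_zero] at hx
      simp [hT, not_lt.mpr hx]
    have h2 : volume.restrict s T = 0 := measure_eq_zero_iff_ae_notMem.mpr this
    rw [Measure.restrict_apply hTm] at h2
    rwa [Set.inter_comm] at h2
  have h3 : volume (Tᶜ ∩ K) = 0 := by
    have : volume.restrict K Tᶜ = 0 := by
      refine measure_eq_zero_iff_ae_notMem.mpr ?_
      filter_upwards [hfK] with x hx
      simp [hT, hx]
    rwa [Measure.restrict_apply hTm.compl] at this
  rw [Measure.restrict_apply hs]
  refine measure_mono_null (fun x hx => ?_) (measure_union_null h1 h3)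
  rcases hx with ⟨hxs, hxK⟩
  by_cases hxT : x ∈ T
  · exact Or.inl ⟨hxs, hxT⟩
  · exact Or.inr ⟨hxT, hxK⟩

lemma aux_CS {f : ℝ → ℝ} (hfmeas : Measurable f) {μ : Measure ℝ}
    (hle : volume.withDensity (fun x => ENNReal.ofReal (f x)) ≤ μ)
    {K : Set ℝ} (hfin : ∫⁻ x in K, (ENNReal.ofReal (f x))⁻¹ ≠ ⊤)
    {g : ℝ → ℝ} (hg : AEStronglyMeasurable g μ) :
    ∫⁻ x in K, ‖g x‖₊ ≤
      eLpNorm g 2 μ * (∫⁻ x in K, (ENNReal.ofReal (f x))⁻¹) ^ (1/2 : ℝ) := by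
  set ν := volume.withDensity (fun x => ENNReal.ofReal (f x)) with hν
  have hνμ : ν ≪ μ := Measure.absolutelyContinuous_of_le hle
  have hfK := aux_fpos hfmeas hfin
  have hac : volume.restrict K ≪ ν := aux_ac hfmeas hfK
  have hgK : AEStronglyMeasurable g (volume.restrict K) := hg.mono_ac (hac.trans hνμ)
  have hgν : AEStronglyMeasurable g ν := hg.mono_ac hνμ
  set Φ : ℝ → ℝ≥0∞ := fun x => (‖g x‖₊ : ℝ≥0∞) * (ENNReal.ofReal (f x)) ^ (1/2 : ℝ) with hΦ
  set Ψ : ℝ → ℝ≥0∞ := fun x => ((ENNReal.ofReal (f x))⁻¹) ^ (1/2 : ℝ) with hΨ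
  have hstep1 : ∫⁻ x in K, ‖g x‖₊ = ∫⁻ x in K, (Φ * Ψ) x := by
    refine lintegral_congr_ae ?_
    filter_upwards [hfK] with x hx
    have hc0 : ENNReal.ofReal (f x) ≠ 0 := (ENNReal.ofReal_pos.mpr hx).ne'
    have hct : ENNReal.ofReal (f x) ≠ ⊤ := ENNReal.ofReal_ne_top
    simp only [Φ, Ψ, Pi.mul_apply]
    rw [mul_assoc, ← ENNReal.mul_rpow_of_ne_top hct (ENNReal.inv_ne_top.mpr hc0),
      ENNReal.mul_inv_cancel hc0 hct, ENNReal.one_rpow, mul_one]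
  have hconj : Real.HolderConjugate 2 2 := ⟨by norm_num, by norm_num, by norm_num⟩
  have hΦm : AEMeasurable Φ (volume.restrict K) :=
    hgK.aemeasurable.nnnorm.coe_nnreal_ennreal.mul (hfmeas.ennreal_ofReal.pow_const _).aemeasurable
  have hΨm : AEMeasurable Ψ (volume.restrict K) :=
    (hfmeas.ennreal_ofReal.inv.pow_const _).aemeasurable
  have hHolder := ENNReal.lintegral_mul_le_Lp_mul_Lq (volume.restrict K) hconj hΦm hΨm
  rw [hstep1]
  refine hHolder.trans (mul_le_mul' ?_ (le_of_eq ?_))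
  · -- (∫⁻ Φ^2)^(1/2) ≤ eLpNorm g 2 μ
    have hptwise : ∀ x, Φ x ^ (2:ℝ) = ENNReal.ofReal (f x) * (‖g x‖₊ : ℝ≥0∞) ^ (2:ℝ) := by
      intro x
      simp only [Φ]
      rw [ENNReal.mul_rpow_of_ne_top ENNReal.coe_ne_top
        (ENNReal.rpow_ne_top_of_nonneg (by norm_num) ENNReal.ofReal_ne_top),
        ← ENNReal.rpow_mul]
      norm_num
      ring
    have h1 : ∫⁻ a in K, Φ a ^ (2:ℝ) ≤ ∫⁻ a, ENNReal.ofReal (f a) * (‖g a‖₊ : ℝ≥0∞) ^ (2:ℝ) := by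
      rw [lintegral_congr (fun x => hptwise x)]
      exact lintegral_mono' Measure.restrict_le_self le_rfl
    have h2 : ∫⁻ a, ENNReal.ofReal (f a) * (‖g a‖₊ : ℝ≥0∞) ^ (2:ℝ)
        = ∫⁻ a, (‖g a‖₊ : ℝ≥0∞) ^ (2:ℝ) ∂ν := by
      rw [lintegral_withDensity_eq_lintegral_mul₀' hfmeas.ennreal_ofReal.aemeasurable
        (hgν.aemeasurable.nnnorm.coe_nnreal_ennreal.pow_const _)]
      rfl
    have h3 : ∫⁻ a, (‖g a‖₊ : ℝ≥0∞) ^ (2:ℝ) ∂ν ≤ ∫⁻ a, (‖g a‖₊ : ℝ≥0∞) ^ (2:ℝ) ∂μ :=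
      lintegral_mono' hle le_rfl
    have h4 : eLpNorm g 2 μ = (∫⁻ a, (‖g a‖₊ : ℝ≥0∞) ^ (2:ℝ) ∂μ) ^ (1/2:ℝ) := by
      rw [eLpNorm_eq_lintegral_rpow_enorm_toReal (by norm_num) (by norm_num)]
      norm_num
      rfl
    rw [h4]
    exact ENNReal.rpow_le_rpow ((h1.trans h2.le).trans h3) (by norm_num)
  · -- (∫⁻ Ψ^2)^(1/2) = (∫⁻ inv)^(1/2)
    congr 1
    refine lintegral_congr fun x => ?_
    simp only [Ψ]
    rw [← ENNReal.rpow_mul]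
    norm_num

lemma aux_integrableOn {f : ℝ → ℝ} (hfmeas : Measurable f) {μ : Measure ℝ}
    (hle : volume.withDensity (fun x => ENNReal.ofReal (f x)) ≤ μ)
    {K : Set ℝ} (hfin : ∫⁻ x in K, (ENNReal.ofReal (f x))⁻¹ ≠ ⊤)
    {g : ℝ → ℝ} (hg : AEStronglyMeasurable g μ) (hg2 : eLpNorm g 2 μ ≠ ⊤) :
    IntegrableOn g K volume := by
  have hνμ : (volume.withDensity (fun x => ENNReal.ofReal (f x))) ≪ μ :=
    Measure.absolutelyContinuous_of_le hle
  have hac := aux_ac hfmeas (aux_fpos hfmeas hfin)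
  refine ⟨hg.mono_ac (hac.trans hνμ), ?_⟩
  refine lt_of_le_of_lt (aux_CS hfmeas hle hfin hg) ?_
  exact ENNReal.mul_lt_top hg2.lt_top
    (ENNReal.rpow_lt_top_of_nonneg (by norm_num) hfin)

lemma aux_tendsto_lintegral {f : ℝ → ℝ} (hfmeas : Measurable f) {μ : Measure ℝ}
    (hle : volume.withDensity (fun x => ENNReal.ofReal (f x)) ≤ μ)
    {K : Set ℝ} (hfin : ∫⁻ x in K, (ENNReal.ofReal (f x))⁻¹ ≠ ⊤)
    {G : ℕ → ℝ → ℝ} (hGc : ∀ n, Continuous (G n)) {g : ℝ → ℝ}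
    (hg : AEStronglyMeasurable g μ)
    (hconv : Tendsto (fun n => eLpNorm (fun x => G n x - g x) 2 μ) atTop (nhds 0)) :
    Tendsto (fun n => ∫⁻ x in K, ‖G n x - g x‖₊) atTop (nhds 0) := by
  have hbd : ∀ n, ∫⁻ x in K, ‖G n x - g x‖₊ ≤
      eLpNorm (fun x => G n x - g x) 2 μ * (∫⁻ x in K, (ENNReal.ofReal (f x))⁻¹) ^ (1/2:ℝ) :=
    fun n => aux_CS hfmeas hle hfin ((hGc n).aestronglyMeasurable.sub hg)
  have hB : (∫⁻ x in K, (ENNReal.ofReal (f x))⁻¹) ^ (1/2:ℝ) ≠ ⊤ :=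
    ENNReal.rpow_ne_top_of_nonneg (by norm_num) hfin
  have hlim : Tendsto (fun n => eLpNorm (fun x => G n x - g x) 2 μ *
      (∫⁻ x in K, (ENNReal.ofReal (f x))⁻¹) ^ (1/2:ℝ)) atTop (nhds 0) := by
    have := ENNReal.Tendsto.mul_const hconv (Or.inr hB)
    simpa using this
  exact tendsto_of_tendsto_of_tendsto_of_le_of_le tendsto_const_nhds hlim
    (fun n => zero_le) hbd

lemma aux_ibp (F φ : ℝ → ℝ) (hF : ContDiff ℝ 1 F) (hφ : ContDiff ℝ 1 φ)
    (hφs : HasCompactSupport φ) :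
    ∫ x, F x * deriv φ x = - ∫ x, deriv F x * φ x := by
  have hFφ : ContDiff ℝ 1 (fun x => F x * φ x) := hF.mul hφ
  have hs : HasCompactSupport (fun x => F x * φ x) := hφs.mul_left
  have hderiv : ∀ x, deriv (fun x => F x * φ x) x = deriv F x * φ x + F x * deriv φ x := by
    intro x
    exact deriv_fun_mul (hF.differentiable one_ne_zero x) (hφ.differentiable one_ne_zero x)
  have hc1 : Continuous fun x => deriv F x * φ x :=
    (hF.continuous_deriv le_rfl).mul hφ.continuous
  have hc2 : Continuous fun x => F x * deriv φ x :=
    hF.continuous.mul (hφ.continuous_deriv le_rfl)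
  have hi1 : Integrable (fun x => deriv F x * φ x) volume :=
    hc1.integrable_of_hasCompactSupport hφs.mul_left
  have hi2 : Integrable (fun x => F x * deriv φ x) volume :=
    hc2.integrable_of_hasCompactSupport hφs.deriv.mul_left
  have hzero : ∫ x, deriv (fun x => F x * φ x) x = 0 := by
    have hint : Integrable (deriv fun x => F x * φ x) volume := by
      refine Continuous.integrable_of_hasCompactSupport ?_ hs.deriv
      exact hFφ.continuous_deriv le_rfl
    have h1 : ∫ x in Set.Iic 0, deriv (fun x => F x * φ x) x = (fun x => F x * φ x) 0 :=
      HasCompactSupport.integral_Iic_deriv_eq hFφ hs 0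
    have h2 : ∫ x in Set.Ioi 0, deriv (fun x => F x * φ x) x = -(fun x => F x * φ x) 0 :=
      HasCompactSupport.integral_Ioi_deriv_eq hFφ hs 0
    have hu : ∫ x in Set.Iic 0 ∪ Set.Ioi 0, deriv (fun x => F x * φ x) x
        = (∫ x in Set.Iic 0, deriv (fun x => F x * φ x) x)
          + ∫ x in Set.Ioi 0, deriv (fun x => F x * φ x) x :=
      setIntegral_union (Set.Iic_disjoint_Ioi le_rfl) measurableSet_Ioi
        hint.integrableOn hint.integrableOn
    rw [Set.Iic_union_Ioi, setIntegral_univ] at hu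
    simp only [h1, h2] at hu
    simpa using hu
  have := hzero
  rw [integral_congr_ae (Filter.Eventually.of_forall hderiv) ] at this
  rw [integral_add hi1 hi2] at this
  linarith

lemma aux_pairing {f : ℝ → ℝ} (hfmeas : Measurable f) {μ : Measure ℝ}
    (hle : volume.withDensity (fun x => ENNReal.ofReal (f x)) ≤ μ)
    {K : Set ℝ} (hK : IsCompact K)
    (hfin : ∫⁻ x in K, (ENNReal.ofReal (f x))⁻¹ ≠ ⊤)
    {ψ : ℝ → ℝ} (hψc : Continuous ψ) (hψ0 : ∀ x ∉ K, ψ x = 0)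
    {G : ℕ → ℝ → ℝ} (hGc : ∀ n, Continuous (G n)) {g : ℝ → ℝ}
    (hg : AEStronglyMeasurable g μ) (hg2 : eLpNorm g 2 μ ≠ ⊤)
    (hconv : Tendsto (fun n => eLpNorm (fun x => G n x - g x) 2 μ) atTop (nhds 0)) :
    Tendsto (fun n => ∫ x, G n x * ψ x) atTop (nhds (∫ x, g x * ψ x)) := by
  have hKm : MeasurableSet K := hK.isClosed.measurableSet
  have hψs : HasCompactSupport ψ := HasCompactSupport.intro hK hψ0
  obtain ⟨C, hC⟩ := hψs.exists_bound_of_continuous hψc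
  have hC0 : 0 ≤ C := le_trans (norm_nonneg (ψ 0)) (hC 0)
  have hintn : ∀ n, Integrable (fun x => G n x * ψ x) volume := fun n =>
    ((hGc n).mul hψc).integrable_of_hasCompactSupport hψs.mul_left
  have hgint : Integrable (fun x => g x * ψ x) volume := by
    have hgK : IntegrableOn g K volume := aux_integrableOn hfmeas hle hfin hg hg2
    have h1 : IntegrableOn (fun x => ψ x * g x) K volume :=
      hgK.bdd_mul hψc.aestronglyMeasurable (Filter.Eventually.of_forall hC)
    have h2 : IntegrableOn (fun x => g x * ψ x) K volume := by
      refine h1.congr_fun (fun x _ => mul_comm _ _) hKm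
    have heq : (fun x => g x * ψ x) = K.indicator (fun x => g x * ψ x) := by
      funext x
      by_cases hx : x ∈ K
      · rw [Set.indicator_of_mem hx]
      · rw [Set.indicator_of_notMem hx, hψ0 x hx, mul_zero]
    rw [heq]
    exact (integrable_indicator_iff hKm).mpr h2
  have hL := aux_tendsto_lintegral hfmeas hle hfin hGc hg hconv
  rw [tendsto_iff_norm_sub_tendsto_zero]
  have hLev : ∀ᶠ n in atTop, ∫⁻ x in K, ‖G n x - g x‖₊ < ⊤ :=
    hL.eventually_lt_const (by simp : (0:ℝ≥0∞) < ⊤)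
  refine squeeze_zero' (Filter.Eventually.of_forall fun n => norm_nonneg _)
    (hLev.mono fun n hn => ?_)
    (show Tendsto (fun n => (ENNReal.ofReal C * ∫⁻ x in K, ‖G n x - g x‖₊).toReal)
      atTop (nhds 0) from ?_)
  · -- the bound
    have hsub : (∫ x, G n x * ψ x) - ∫ x, g x * ψ x
        = ∫ x, (G n x - g x) * ψ x := by
      rw [← integral_sub (hintn n) hgint]
      congr 1
      funext x
      ring
    rw [hsub]
    refine (norm_integral_le_lintegral_norm _).trans ?_
    have hpoint : ∀ x, ENNReal.ofReal ‖(G n x - g x) * ψ x‖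
        = K.indicator (fun x => ENNReal.ofReal ‖(G n x - g x) * ψ x‖) x := by
      intro x
      by_cases hx : x ∈ K
      · rw [Set.indicator_of_mem hx]
      · rw [Set.indicator_of_notMem hx, hψ0 x hx, mul_zero]
        simp
    rw [lintegral_congr hpoint, lintegral_indicator hKm]
    have hbd : ∫⁻ x in K, ENNReal.ofReal ‖(G n x - g x) * ψ x‖
        ≤ ENNReal.ofReal C * ∫⁻ x in K, ‖G n x - g x‖₊ := by
      rw [← lintegral_const_mul' _ _ ENNReal.ofReal_ne_top]
      refine lintegral_mono fun x => ?_
      rw [norm_mul, ← enorm_eq_nnnorm, ← ofReal_norm, ← ENNReal.ofReal_mul hC0]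
      refine ENNReal.ofReal_le_ofReal ?_
      calc ‖G n x - g x‖ * ‖ψ x‖ ≤ ‖G n x - g x‖ * C :=
            mul_le_mul_of_nonneg_left (hC x) (norm_nonneg _)
        _ = C * ‖G n x - g x‖ := mul_comm _ _
    exact ENNReal.toReal_mono
      (ENNReal.mul_ne_top ENNReal.ofReal_ne_top hn.ne) hbd
  · -- the bound tends to zero
    have h1 : Tendsto (fun n => ENNReal.ofReal C * ∫⁻ x in K, ‖G n x - g x‖₊)
        atTop (nhds 0) := by
      have := ENNReal.Tendsto.const_mul (a := ENNReal.ofReal C) hL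
        (Or.inr ENNReal.ofReal_ne_top)
      simpa using this
    exact (ENNReal.tendsto_toReal (by simp)).comp h1

lemma aux_eps {f : ℝ → ℝ} {I M : Set ℝ}
    (hM : M = {x ∈ closure I | ∀ ε > 0,
      ∫⁻ t in I ∩ Set.Ioo (x - ε) (x + ε), (ENNReal.ofReal (f t))⁻¹ = ⊤})
    {x : ℝ} (hxI : x ∈ I) (hxM : x ∉ M) :
    ∃ ε > 0, ∫⁻ t in I ∩ Set.Ioo (x - ε) (x + ε), (ENNReal.ofReal (f t))⁻¹ ≠ ⊤ := by
  rw [hM] at hxM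
  simp only [Set.mem_setOf_eq, not_and] at hxM
  have := hxM (subset_closure hxI)
  push_neg at this
  exact this

lemma aux_finK {f : ℝ → ℝ} {I M U : Set ℝ}
    (hM : M = {x ∈ closure I | ∀ ε > 0,
      ∫⁻ t in I ∩ Set.Ioo (x - ε) (x + ε), (ENNReal.ofReal (f t))⁻¹ = ⊤})
    (hU : U = I \ M)
    {K : Set ℝ} (hK : IsCompact K) (hKU : K ⊆ U) :
    ∫⁻ t in K, (ENNReal.ofReal (f t))⁻¹ ≠ ⊤ := by
  have hKIM : ∀ x ∈ K, x ∈ I ∧ x ∉ M := by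
    intro x hx
    have := hKU hx
    rw [hU] at this
    exact this
  have hx : ∀ x : K, ∃ ε > 0,
      ∫⁻ t in I ∩ Set.Ioo ((x:ℝ) - ε) ((x:ℝ) + ε), (ENNReal.ofReal (f t))⁻¹ ≠ ⊤ :=
    fun x => aux_eps hM (hKIM x x.2).1 (hKIM x x.2).2
  choose ε hεpos hεfin using hx
  have hcover : K ⊆ ⋃ x : K, Set.Ioo ((x:ℝ) - ε x) ((x:ℝ) + ε x) := by
    intro y hy
    exact Set.mem_iUnion.2 ⟨⟨y, hy⟩, by
      constructor <;> simp only [] <;> linarith [hεpos ⟨y, hy⟩]⟩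
  obtain ⟨t, ht⟩ := hK.elim_finite_subcover _ (fun x : K => isOpen_Ioo) hcover
  have hsub : K ⊆ ⋃ i ∈ t, (I ∩ Set.Ioo ((i:ℝ) - ε i) ((i:ℝ) + ε i)) := by
    intro y hy
    obtain ⟨i, hit, hyi⟩ := Set.mem_iUnion₂.1 (ht hy)
    exact Set.mem_biUnion hit ⟨(hKIM y hy).1, hyi⟩
  have h1 : ∫⁻ t' in K, (ENNReal.ofReal (f t'))⁻¹
      ≤ ∑ i ∈ t, ∫⁻ t' in I ∩ Set.Ioo ((i:ℝ) - ε i) ((i:ℝ) + ε i),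
          (ENNReal.ofReal (f t'))⁻¹ := by
    refine (lintegral_mono_set hsub).trans ?_
    rw [← Finset.set_biUnion_coe, Set.biUnion_eq_iUnion]
    refine (lintegral_mono' Measure.restrict_iUnion_le le_rfl).trans ?_
    rw [lintegral_sum_measure, ← Finset.tsum_subtype']
  refine ne_top_of_le_ne_top ?_ h1
  refine (ENNReal.sum_lt_top.mpr fun i _ => ?_).ne
  exact (hεfin i).lt_top

lemma aux_open {f : ℝ → ℝ} {a b : ℝ} {I M U : Set ℝ} (hI : I = Set.Ioo a b)
    (hM : M = {x ∈ closure I | ∀ ε > 0,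
      ∫⁻ t in I ∩ Set.Ioo (x - ε) (x + ε), (ENNReal.ofReal (f t))⁻¹ = ⊤})
    (hU : U = I \ M) : IsOpen U := by
  rw [Metric.isOpen_iff]
  intro x hx
  rw [hU] at hx
  obtain ⟨hxI, hxM⟩ := hx
  obtain ⟨ε, hε, hfin⟩ := aux_eps hM hxI hxM
  have hIopen : IsOpen I := hI ▸ isOpen_Ioo
  obtain ⟨δ, hδ, hball⟩ := Metric.isOpen_iff.1 hIopen x hxI
  refine ⟨min (ε/2) δ, by positivity, ?_⟩
  intro y hy
  rw [Metric.mem_ball, Real.dist_eq] at hy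
  have hyx : |y - x| < ε/2 := lt_of_lt_of_le hy (min_le_left _ _)
  have hyI : y ∈ I := hball (by
    rw [Metric.mem_ball, Real.dist_eq]
    exact lt_of_lt_of_le hy (min_le_right _ _))
  rw [hU]
  refine ⟨hyI, ?_⟩
  rw [hM]
  rintro ⟨-, h2⟩
  have h3 := h2 (ε/2) (by linarith)
  have hss : I ∩ Set.Ioo (y - ε/2) (y + ε/2) ⊆ I ∩ Set.Ioo (x - ε) (x + ε) := by
    rw [abs_lt] at hyx
    rintro z ⟨hzI, hz1, hz2⟩
    exact ⟨hzI, by constructor <;> linarith⟩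
  exact hfin (eq_top_iff.2 (h3 ▸ lintegral_mono_set hss))

lemma aux_locint {f : ℝ → ℝ} (hfmeas : Measurable f) {μ : Measure ℝ}
    (hle : volume.withDensity (fun x => ENNReal.ofReal (f x)) ≤ μ)
    {I M U : Set ℝ}
    (hM : M = {x ∈ closure I | ∀ ε > 0,
      ∫⁻ t in I ∩ Set.Ioo (x - ε) (x + ε), (ENNReal.ofReal (f t))⁻¹ = ⊤})
    (hU : U = I \ M) (hUopen : IsOpen U)
    {g : ℝ → ℝ} (hg : AEStronglyMeasurable g μ) (hg2 : eLpNorm g 2 μ ≠ ⊤) :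
    LocallyIntegrableOn g U volume := by
  intro x hx
  obtain ⟨δ, hδ, hball⟩ := Metric.isOpen_iff.1 hUopen x hx
  have hKsub : Set.Icc (x - δ/2) (x + δ/2) ⊆ U := by
    intro y hy
    apply hball
    rw [Metric.mem_ball, Real.dist_eq, abs_lt]
    obtain ⟨h1, h2⟩ := hy
    constructor <;> linarith
  exact ⟨Set.Icc (x - δ/2) (x + δ/2),
    mem_nhdsWithin_of_mem_nhds (Icc_mem_nhds (by linarith) (by linarith)),
    aux_integrableOn hfmeas hle (aux_finK hM hU isCompact_Icc hKsub) hg hg2⟩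

lemma aux_intmul {f : ℝ → ℝ} (hfmeas : Measurable f) {μ : Measure ℝ}
    (hle : volume.withDensity (fun x => ENNReal.ofReal (f x)) ≤ μ)
    {K : Set ℝ} (hK : IsCompact K)
    (hfin : ∫⁻ x in K, (ENNReal.ofReal (f x))⁻¹ ≠ ⊤)
    {ψ : ℝ → ℝ} (hψc : Continuous ψ) (hψ0 : ∀ x ∉ K, ψ x = 0)
    {g : ℝ → ℝ} (hg : AEStronglyMeasurable g μ) (hg2 : eLpNorm g 2 μ ≠ ⊤) :
    Integrable (fun x => g x * ψ x) volume := by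
  have hKm : MeasurableSet K := hK.isClosed.measurableSet
  have hψs : HasCompactSupport ψ := HasCompactSupport.intro hK hψ0
  obtain ⟨C, hC⟩ := hψs.exists_bound_of_continuous hψc
  have hgK : IntegrableOn g K volume := aux_integrableOn hfmeas hle hfin hg hg2
  have h1 : IntegrableOn (fun x => ψ x * g x) K volume :=
    hgK.bdd_mul hψc.aestronglyMeasurable (Filter.Eventually.of_forall hC)
  have h2 : IntegrableOn (fun x => g x * ψ x) K volume :=
    h1.congr_fun (fun x _ => mul_comm _ _) hKm
  have heq : (fun x => g x * ψ x) = K.indicator (fun x => g x * ψ x) := by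
    funext x
    by_cases hx : x ∈ K
    · rw [Set.indicator_of_mem hx]
    · rw [Set.indicator_of_notMem hx, hψ0 x hx, mul_zero]
  rw [heq]
  exact (integrable_indicator_iff hKm).mpr h2


/-- `g` is a weak (distributional) derivative of `u` on the open set `U`. -/
def HasWeakDerivOn (u g : ℝ → ℝ) (U : Set ℝ) : Prop :=
  LocallyIntegrableOn u U volume ∧ LocallyIntegrableOn g U volume ∧
  ∀ φ : ℝ → ℝ, ContDiff ℝ (⊤ : ℕ∞) φ → HasCompactSupport φ → tsupport φ ⊆ U →
    ∫ x in U, u x * deriv φ x = - ∫ x in U, g x * φ x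

/-- If `u ∈ H¹_μ(I)` and `v ∈ Γ(u)`, then `u` has a weak derivative `u'` on `U = I \ M`
which coincides with `v` a.e. for `f·𝓛¹` and has `∫_U (u')² f < ∞`; in particular all
`μ`-gradients of `u` coincide `μ`-a.e. on `V = I \ (M ∪ A)`. -/
theorem gradient_is_weak_derivative_outside_critical_set
    (a b : ℝ) (hab : a < b) (I : Set ℝ) (hI : I = Set.Ioo a b)
    (μ : Measure ℝ) [IsFiniteMeasure μ] (hμI : μ Iᶜ = 0)
    (f : ℝ → ℝ) (hfmeas : Measurable f) (hfnonneg : 0 ≤ f)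
    (μs : Measure ℝ) (hsing : μs ⟂ₘ volume)
    (hdecomp : μ = volume.withDensity (fun x => ENNReal.ofReal (f x)) + μs)
    (A : Set ℝ) (hAmeas : MeasurableSet A) (hAI : A ⊆ I)
    (hAnull : volume A = 0) (hconc : μs Aᶜ = 0)
    (M : Set ℝ)
    (hM : M = {x ∈ closure I | ∀ ε > 0,
      ∫⁻ t in I ∩ Set.Ioo (x - ε) (x + ε), (ENNReal.ofReal (f t))⁻¹ = ⊤})
    (U : Set ℝ) (hU : U = I \ M)
    (V : Set ℝ) (hV : V = I \ (M ∪ A))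
    (u v : ℝ → ℝ) (huL2 : MemLp u 2 μ) (hvL2 : MemLp v 2 μ)
    (hv : IsGradient μ u v) :
    (∃ g : ℝ → ℝ, HasWeakDerivOn u g U ∧
      (∀ᵐ x ∂(volume.restrict U), 0 < f x → g x = v x) ∧
      ∫⁻ x in U, ENNReal.ofReal ((g x) ^ 2 * f x) ≠ ⊤) ∧
    (∀ w : ℝ → ℝ, MemLp w 2 μ → IsGradient μ u w →
      ∀ᵐ x ∂(μ.restrict V), v x = w x) := by
  
  have hle : volume.withDensity (fun x => ENNReal.ofReal (f x)) ≤ μ := by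
    rw [hdecomp]; exact Measure.le_add_right le_rfl
  have hUopen : IsOpen U := aux_open hI hM hU
  obtain ⟨Useq, hUC1, hUu, hUv⟩ := hv
  have hUc : ∀ n, Continuous (Useq n) := fun n => (hUC1 n).continuous
  have hUdc : ∀ n, Continuous (deriv (Useq n)) := fun n => (hUC1 n).continuous_deriv le_rfl
  -- the core integration-by-parts identity for C¹ test functions supported in U
  have core : ∀ φ : ℝ → ℝ, ContDiff ℝ 1 φ → HasCompactSupport φ → tsupport φ ⊆ U →
      ∫ x, u x * deriv φ x = - ∫ x, v x * φ x := by
    intro φ hφ hφs hφU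
    have hK : IsCompact (tsupport φ) := hφs
    have hfin := aux_finK hM hU hK hφU
    have hφc := hφ.continuous
    have hφdc := hφ.continuous_deriv le_rfl
    have hd0 : ∀ x ∉ tsupport φ, deriv φ x = 0 := fun x hx =>
      Function.notMem_support.mp (fun hc => hx (support_deriv_subset hc))
    have hφ0 : ∀ x ∉ tsupport φ, φ x = 0 := fun x hx => image_eq_zero_of_notMem_tsupport hx
    have t1 : Tendsto (fun n => ∫ x, Useq n x * deriv φ x) atTop
        (nhds (∫ x, u x * deriv φ x)) :=
      aux_pairing hfmeas hle hK hfin hφdc hd0 hUc huL2.1 huL2.2.ne hUu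
    have t2 : Tendsto (fun n => ∫ x, deriv (Useq n) x * φ x) atTop
        (nhds (∫ x, v x * φ x)) :=
      aux_pairing hfmeas hle hK hfin hφc hφ0 hUdc hvL2.1 hvL2.2.ne hUv
    have heq : (fun n => ∫ x, Useq n x * deriv φ x)
        = fun n => - ∫ x, deriv (Useq n) x * φ x :=
      funext fun n => aux_ibp _ _ (hUC1 n) hφ hφs
    rw [heq] at t1
    exact tendsto_nhds_unique t1 t2.neg
  constructor
  · refine ⟨v, ⟨?_, ?_, ?_⟩, ?_, ?_⟩
    · exact aux_locint hfmeas hle hM hU hUopen huL2.1 huL2.2.ne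
    · exact aux_locint hfmeas hle hM hU hUopen hvL2.1 hvL2.2.ne
    · intro φ hφ hφs hφU
      have hd0 : ∀ x ∉ tsupport φ, deriv φ x = 0 := fun x hx =>
        Function.notMem_support.mp (fun hc => hx (support_deriv_subset hc))
      have hφ0 : ∀ x ∉ tsupport φ, φ x = 0 := fun x hx => image_eq_zero_of_notMem_tsupport hx
      have e1 : ∫ x in U, u x * deriv φ x = ∫ x, u x * deriv φ x :=
        setIntegral_eq_integral_of_forall_compl_eq_zero fun x hx => by
          rw [hd0 x (fun hc => hx (hφU hc)), mul_zero]
      have e2 : ∫ x in U, v x * φ x = ∫ x, v x * φ x :=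
        setIntegral_eq_integral_of_forall_compl_eq_zero fun x hx => by
          rw [hφ0 x (fun hc => hx (hφU hc)), mul_zero]
      rw [e1, e2]
      exact core φ (hφ.of_le (by simp)) hφs hφU
    · exact Filter.Eventually.of_forall fun x _ => rfl
    · -- finiteness of ∫_U v² f
      have hνμ : (volume.withDensity fun x => ENNReal.ofReal (f x)) ≪ μ :=
        Measure.absolutelyContinuous_of_le hle
      have hvν : AEStronglyMeasurable v (volume.withDensity fun x => ENNReal.ofReal (f x)) :=
        hvL2.1.mono_ac hνμ
      have hpt : ∀ x, ENNReal.ofReal ((v x) ^ 2 * f x)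
          = ENNReal.ofReal (f x) * (‖v x‖₊ : ℝ≥0∞) ^ (2:ℝ) := by
        intro x
        rw [ENNReal.ofReal_mul (sq_nonneg _), mul_comm]
        congr 1
        rw [← sq_abs, ENNReal.ofReal_pow (abs_nonneg _), ← Real.enorm_eq_ofReal_abs,
          ← ENNReal.rpow_natCast]
        norm_num
        rfl
      have hchain : ∫⁻ x in U, ENNReal.ofReal ((v x) ^ 2 * f x)
          ≤ ∫⁻ x, (‖v x‖₊ : ℝ≥0∞) ^ (2:ℝ) ∂μ := by
        calc ∫⁻ x in U, ENNReal.ofReal ((v x) ^ 2 * f x)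
            = ∫⁻ x in U, ENNReal.ofReal (f x) * (‖v x‖₊ : ℝ≥0∞) ^ (2:ℝ) :=
              lintegral_congr fun x => hpt x
          _ ≤ ∫⁻ x, ENNReal.ofReal (f x) * (‖v x‖₊ : ℝ≥0∞) ^ (2:ℝ) :=
              lintegral_mono' Measure.restrict_le_self le_rfl
          _ = ∫⁻ x, (‖v x‖₊ : ℝ≥0∞) ^ (2:ℝ)
                ∂(volume.withDensity fun x => ENNReal.ofReal (f x)) := by
              rw [lintegral_withDensity_eq_lintegral_mul₀'
                hfmeas.ennreal_ofReal.aemeasurable (hvν.aemeasurable.nnnorm.coe_nnreal_ennreal.pow_const _)]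
              rfl
          _ ≤ ∫⁻ x, (‖v x‖₊ : ℝ≥0∞) ^ (2:ℝ) ∂μ := lintegral_mono' hle le_rfl
      refine ne_top_of_le_ne_top ?_ hchain
      have := lintegral_rpow_enorm_lt_top_of_eLpNorm_lt_top
        (f := v) (μ := μ) (p := 2) (by norm_num) (by norm_num) hvL2.2
      rw [show ((2:ℝ≥0∞).toReal) = (2:ℝ) by norm_num] at this
      exact this.ne
  · intro w hwL2 hw
    obtain ⟨Wseq, hWC1, hWu, hWw⟩ := hw
    have hWc : ∀ n, Continuous (Wseq n) := fun n => (hWC1 n).continuous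
    have hWdc : ∀ n, Continuous (deriv (Wseq n)) := fun n => (hWC1 n).continuous_deriv le_rfl
    -- v = w a.e. (Lebesgue) on U
    have key : ∀ᵐ x ∂volume, x ∈ U → (fun y => v y - w y) x = 0 := by
      refine hUopen.ae_eq_zero_of_integral_contDiff_smul_eq_zero ?_ ?_
      · exact aux_locint hfmeas hle hM hU hUopen (hvL2.1.sub hwL2.1) (hvL2.sub hwL2).2.ne
      · intro φ hφ hφs hφU
        have hK : IsCompact (tsupport φ) := hφs
        have hfin := aux_finK hM hU hK hφU
        have hφC1 : ContDiff ℝ 1 φ := hφ.of_le (by exact_mod_cast le_top)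
        have hφc := hφC1.continuous
        have hφdc := hφC1.continuous_deriv le_rfl
        have hd0 : ∀ x ∉ tsupport φ, deriv φ x = 0 := fun x hx =>
          Function.notMem_support.mp (fun hc => hx (support_deriv_subset hc))
        have hφ0 : ∀ x ∉ tsupport φ, φ x = 0 := fun x hx => image_eq_zero_of_notMem_tsupport hx
        -- limits of ∫ Uₙ' φ and ∫ Wₙ' φ
        have tV : Tendsto (fun n => ∫ x, deriv (Useq n) x * φ x) atTop
            (nhds (∫ x, v x * φ x)) :=
          aux_pairing hfmeas hle hK hfin hφc hφ0 hUdc hvL2.1 hvL2.2.ne hUv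
        have tW : Tendsto (fun n => ∫ x, deriv (Wseq n) x * φ x) atTop
            (nhds (∫ x, w x * φ x)) :=
          aux_pairing hfmeas hle hK hfin hφc hφ0 hWdc hwL2.1 hwL2.2.ne hWw
        -- Uₙ - Wₙ → 0 in L²(μ)
        have hdiffconv : Tendsto (fun n =>
            eLpNorm (fun x => (Useq n x - Wseq n x) - (0:ℝ)) 2 μ) atTop (nhds 0) := by
          have hbd : ∀ n, eLpNorm (fun x => (Useq n x - Wseq n x) - (0:ℝ)) 2 μ
              ≤ eLpNorm (fun x => Useq n x - u x) 2 μ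
                + eLpNorm (fun x => Wseq n x - u x) 2 μ := by
            intro n
            have h1 : AEStronglyMeasurable (fun x => Useq n x - u x) μ :=
              (hUc n).aestronglyMeasurable.sub huL2.1
            have h2 : AEStronglyMeasurable (fun x => Wseq n x - u x) μ :=
              (hWc n).aestronglyMeasurable.sub huL2.1
            have heq : (fun x => (Useq n x - Wseq n x) - (0:ℝ))
                = (fun x => Useq n x - u x) - (fun x => Wseq n x - u x) := by
              funext x; simp only [Pi.sub_apply]; ring
            rw [heq]
            exact eLpNorm_sub_le h1 h2 (by norm_num)
          have hsum : Tendsto (fun n => eLpNorm (fun x => Useq n x - u x) 2 μ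
              + eLpNorm (fun x => Wseq n x - u x) 2 μ) atTop (nhds 0) := by
            have := hUu.add hWu
            simpa using this
          exact tendsto_of_tendsto_of_tendsto_of_le_of_le tendsto_const_nhds hsum
            (fun n => zero_le) hbd
        -- ∫ (Uₙ - Wₙ) φ' → 0
        have tdiff : Tendsto (fun n => ∫ x, (Useq n x - Wseq n x) * deriv φ x)
            atTop (nhds (∫ x, (0:ℝ) * deriv φ x)) :=
          aux_pairing hfmeas hle hK hfin hφdc hd0
            (fun n => (hUc n).sub (hWc n)) aestronglyMeasurable_const
            (by simp [eLpNorm_zero] : eLpNorm (fun _ : ℝ => (0:ℝ)) 2 μ ≠ ⊤) hdiffconv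
        have tdiff0 : Tendsto (fun n => ∫ x, (Useq n x - Wseq n x) * deriv φ x)
            atTop (nhds 0) := by
          simpa using tdiff
        -- integration by parts for Uₙ - Wₙ
        have hibp : ∀ n, ∫ x, (Useq n x - Wseq n x) * deriv φ x
            = -((∫ x, deriv (Useq n) x * φ x) - ∫ x, deriv (Wseq n) x * φ x) := by
          intro n
          have hFC1 : ContDiff ℝ 1 (fun x => Useq n x - Wseq n x) :=
            (hUC1 n).sub (hWC1 n)
          have h := aux_ibp _ φ hFC1 hφC1 hφs
          rw [h]
          congr 1
          have hder : ∀ x, deriv (fun x => Useq n x - Wseq n x) x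
              = deriv (Useq n) x - deriv (Wseq n) x := fun x =>
            deriv_fun_sub ((hUC1 n).differentiable one_ne_zero x) ((hWC1 n).differentiable one_ne_zero x)
          have hi1 : Integrable (fun x => deriv (Useq n) x * φ x) volume :=
            ((hUdc n).mul hφc).integrable_of_hasCompactSupport hφs.mul_left
          have hi2 : Integrable (fun x => deriv (Wseq n) x * φ x) volume :=
            ((hWdc n).mul hφc).integrable_of_hasCompactSupport hφs.mul_left
          calc ∫ x, deriv (fun x => Useq n x - Wseq n x) x * φ x
              = ∫ x, (deriv (Useq n) x * φ x - deriv (Wseq n) x * φ x) := by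
                refine integral_congr_ae (Filter.Eventually.of_forall fun x => ?_)
                simp only [hder]; ring
            _ = (∫ x, deriv (Useq n) x * φ x) - ∫ x, deriv (Wseq n) x * φ x :=
                integral_sub hi1 hi2
        -- conclude ∫ v φ = ∫ w φ
        have heqlim : (∫ x, v x * φ x) = ∫ x, w x * φ x := by
          have t3 : Tendsto (fun n => ∫ x, (Useq n x - Wseq n x) * deriv φ x) atTop
              (nhds (-((∫ x, v x * φ x) - ∫ x, w x * φ x))) := by
            have := (tV.sub tW).neg
            refine Tendsto.congr (fun n => (hibp n).symm) this
          have := tendsto_nhds_unique t3 tdiff0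
          have h4 : (∫ x, v x * φ x) - ∫ x, w x * φ x = 0 := by linarith [neg_eq_zero.mp this]
          linarith
        -- the smul integral
        have hiv : Integrable (fun x => v x * φ x) volume :=
          aux_intmul hfmeas hle hK hfin hφc hφ0 hvL2.1 hvL2.2.ne
        have hiw : Integrable (fun x => w x * φ x) volume :=
          aux_intmul hfmeas hle hK hfin hφc hφ0 hwL2.1 hwL2.2.ne
        calc ∫ x, φ x • (v x - w x) = ∫ x, (v x * φ x - w x * φ x) := by
              refine integral_congr_ae (Filter.Eventually.of_forall fun x => ?_)
              simp only [smul_eq_mul]; ring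
          _ = (∫ x, v x * φ x) - ∫ x, w x * φ x := integral_sub hiv hiw
          _ = 0 := by rw [heqlim]; ring
    -- transfer to μ.restrict V
    have hVsub : V ⊆ U ∩ Aᶜ := by
      rw [hV, hU]
      rintro x ⟨hxI, hx2⟩
      exact ⟨⟨hxI, fun h => hx2 (Or.inl h)⟩, fun h => hx2 (Or.inr h)⟩
    refine Filter.Eventually.filter_mono (ae_mono (Measure.restrict_mono hVsub le_rfl)) ?_
    have hμs0 : μs.restrict (U ∩ Aᶜ) = 0 :=
      Measure.restrict_eq_zero.mpr (measure_mono_null Set.inter_subset_right hconc)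
    have hμres : μ.restrict (U ∩ Aᶜ)
        = (volume.withDensity fun x => ENNReal.ofReal (f x)).restrict (U ∩ Aᶜ) := by
      rw [hdecomp, Measure.restrict_add, hμs0, add_zero]
    rw [hμres]
    have hacr : (volume.withDensity fun x => ENNReal.ofReal (f x)).restrict (U ∩ Aᶜ)
        ≪ volume.restrict (U ∩ Aᶜ) :=
      (withDensity_absolutelyContinuous _ _).restrict _
    refine Filter.Eventually.filter_mono hacr.ae_le ?_
    have hUm : MeasurableSet (U ∩ Aᶜ) := hUopen.measurableSet.inter hAmeas.compl
    have h1 : ∀ᵐ x ∂volume.restrict (U ∩ Aᶜ), x ∈ U ∩ Aᶜ := ae_restrict_mem hUm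
    have h2 := ae_restrict_of_ae (s := U ∩ Aᶜ) key
    filter_upwards [h1, h2] with x hx1 hx2
    have := hx2 hx1.1
    simpa [sub_eq_zero] using this
end
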